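/- arXiv:2007.02257 — 8 statements merged into one kernel-verified Lean document; each statement's English description precedes it below -/
import Mathlib

section
/- Let G be a group, N a normal subgroup, and f : N → ℝ a G-quasi-invariant quasimorphism with defect D(f) and invariance constant D'(f). Then there exists a function f' : G → ℝ extending f (i.e., f'|_N = f) which is an N-quasimorphism with defect D''(f') ≤ D(f) + D'(f). -/
/-!
Choose a representative `r_C` in every coset `C` of `N`, with `r_N = 1`, and put
`f' g := f (r_{gN}⁻¹ * g)`. Right multiplication by `x ∈ N` keeps the coset, so
`f' (g * x) = f (r⁻¹ g * x)` and only the defect `D` of `f` enters. Left multiplication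
also keeps the coset (as `N` is normal) but gives `r⁻¹ x g = (r⁻¹ x r) * (r⁻¹ g)`, so
replacing `f (r⁻¹ x r)` by `f x` costs the additional `D'`.
-/

namespace Subgroup

variable {G : Type*} [Group G] (N : Subgroup G)

theorem mem_iff_mk_one_eq_mk (g : G) : g ∈ N ↔ ((1 : G) : G ⧸ N) = g := by
  rw [QuotientGroup.eq, inv_one, one_mul]

noncomputable def cosetRep (g : G) : G :=
  open Classical in if g ∈ N then 1 else (g : G ⧸ N).out

theorem cosetRep_of_mem {x : G} (hx : x ∈ N) : N.cosetRep x = 1 := by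
  simp [cosetRep, hx]

theorem mk_cosetRep (g : G) : ((N.cosetRep g : G) : G ⧸ N) = g := by
  unfold cosetRep
  split_ifs with hg
  · exact (N.mem_iff_mk_one_eq_mk g).1 hg
  · exact QuotientGroup.out_eq' _

theorem cosetRep_congr {g h : G} (hgh : (g : G ⧸ N) = h) : N.cosetRep g = N.cosetRep h := by
  have hmem : g ∈ N ↔ h ∈ N := by
    rw [mem_iff_mk_one_eq_mk, mem_iff_mk_one_eq_mk, hgh]
  unfold cosetRep
  rw [hgh]
  split_ifs <;> tauto

theorem cosetRep_mul_of_mem {x : G} (g : G) (hx : x ∈ N) :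
    N.cosetRep (g * x) = N.cosetRep g :=
  N.cosetRep_congr (QuotientGroup.mk_mul_of_mem g hx)

theorem cosetRep_mem_mul [N.Normal] {x : G} (g : G) (hx : x ∈ N) :
    N.cosetRep (x * g) = N.cosetRep g :=
  N.cosetRep_congr <| by
    rw [QuotientGroup.mk_mul, (QuotientGroup.eq_one_iff x).2 hx, one_mul]

/-- The `N`-component of `g` in the decomposition `g = cosetRep g * repInvMul g`. -/
noncomputable def repInvMul (g : G) : N :=
  ⟨(N.cosetRep g)⁻¹ * g, QuotientGroup.eq.1 (N.mk_cosetRep g)⟩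

theorem repInvMul_of_mem {x : G} (hx : x ∈ N) : N.repInvMul x = ⟨x, hx⟩ := by
  ext
  simp [repInvMul, N.cosetRep_of_mem hx]

theorem repInvMul_coe (x : N) : N.repInvMul x = x :=
  N.repInvMul_of_mem x.2

theorem repInvMul_mul_of_mem {x : G} (g : G) (hx : x ∈ N) :
    N.repInvMul (g * x) = N.repInvMul g * ⟨x, hx⟩ := by
  ext
  simp [repInvMul, N.cosetRep_mul_of_mem g hx, mul_assoc]

/-- The conjugate is written as `r⁻¹ * x * r⁻¹⁻¹` to match the shape `g * x * g⁻¹`. -/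
theorem repInvMul_mem_mul [N.Normal] {x : G} (g : G) (hx : x ∈ N) :
    N.repInvMul (x * g) =
      ⟨(N.cosetRep g)⁻¹ * x * (N.cosetRep g)⁻¹⁻¹,
        ‹N.Normal›.conj_mem x hx (N.cosetRep g)⁻¹⟩ * N.repInvMul g := by
  ext
  simp [repInvMul, N.cosetRep_mem_mul g hx, mul_assoc]

end Subgroup

/-- A `G`-quasi-invariant quasimorphism on a normal subgroup `N` of `G` extends to an
`N`-quasimorphism on `G` with defect at most `D + D'`. -/
theorem extension_to_N_quasimorphism {G : Type*} [Group G] (N : Subgroup G) (hN : N.Normal)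
    (f : N → ℝ) (D D' : ℝ)
    (hD : ∀ x y : N, |f (x * y) - f x - f y| ≤ D)
    (hD' : ∀ (g : G) (x : N), |f ⟨g * x * g⁻¹, hN.conj_mem x x.2 g⟩ - f x| ≤ D') :
    ∃ f' : G → ℝ, (∀ x : N, f' x = f x) ∧
      ∀ (g x : G), x ∈ N →
        |f' (g * x) - f' g - f' x| ≤ D + D' ∧ |f' (x * g) - f' x - f' g| ≤ D + D' := by
  have : N.Normal := hN
  have hD'_nonneg : 0 ≤ D' := (abs_nonneg _).trans (hD' 1 1)
  refine ⟨fun g => f (N.repInvMul g), fun x => congrArg f (N.repInvMul_coe x),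
    fun g x hx => ⟨?_, ?_⟩⟩ <;> beta_reduce
  · rw [N.repInvMul_mul_of_mem g hx, N.repInvMul_of_mem hx]
    exact (hD _ _).trans (le_add_of_nonneg_right hD'_nonneg)
  · rw [N.repInvMul_mem_mul g hx, N.repInvMul_of_mem hx]
    have hconj := hD' (N.cosetRep g)⁻¹ ⟨x, hx⟩
    have hmul := hD ⟨_, hN.conj_mem x hx (N.cosetRep g)⁻¹⟩ (N.repInvMul g)
    rw [abs_le] at hconj hmul ⊢
    constructor <;> linarith [hconj.1, hconj.2, hmul.1, hmul.2]
end

section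
/- Let G be a group, N a normal subgroup, and f : N → ℝ a homogeneous G-quasi-invariant quasimorphism. Then D(f) = sup_{h₁,h₂ ∈ N} |f([h₁,h₂])| = sup_{g ∈ G, h ∈ N} |f([g,h])|. In particular |f([g,h])| ≤ D(f) for every g ∈ G and h ∈ N. -/
open scoped commutatorElement

/-!
A homogeneous quasimorphism `f` that is quasi-invariant under an automorphism is invariant,
since `n • (f ∘ φ - f) = (f ∘ φ - f) ∘ (· ^ n)` stays bounded. Hence `f` is a class
function, and as `f ⁅g, h⁆` differs from `f (g h g⁻¹) + f h⁻¹ = 0` by at most the defect `D`,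
`|f ⁅g, h⁆| ≤ D`.

Conversely (Bavard), if `f ≤ C` on commutators, write `(x y)ⁿ = xⁿ cₙ yⁿ`. The error term
`c_{m+2}` is a conjugate of a commutator times a conjugate of `c_m`, so `f (c_{2j}) ≤ j (C + D)`,
and dividing `f ((x y)^{2j}) ≤ f (x^{2j}) + f (c_{2j}) + f (y^{2j}) + 2 D` by `2 j` gives
`f (x y) - f x - f y ≤ (C + D) / 2`. Taking the supremum, `D ≤ (C + D) / 2`, i.e. `D ≤ C`.
-/

theorem nonpos_of_forall_nat_mul_le {K : Type*} [Field K] [LinearOrder K] [IsStrictOrderedRing K]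
    [Archimedean K] {a b : K} (h : ∀ n : ℕ, n * a ≤ b) : a ≤ 0 := by
  by_contra! ha
  obtain ⟨n, hn⟩ := exists_lt_nsmul ha b
  exact (h n).not_gt (by simpa [nsmul_eq_mul] using hn)

theorem conj_commutator_mul_conj_eq {H : Type*} [Group H] (x y : H) (m : ℕ) :
    (x ^ (m + 2))⁻¹ * (x * y) ^ (m + 2) * (y ^ (m + 2))⁻¹ =
      ((x ^ (m + 1))⁻¹ * y) * ⁅x * y * x ^ m, (y ^ 2)⁻¹ * x⁻¹⁆ * ((x ^ (m + 1))⁻¹ * y)⁻¹ *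
        (y ^ 2 * ((x ^ m)⁻¹ * (x * y) ^ m * (y ^ m)⁻¹) * (y ^ 2)⁻¹) := by
  rw [pow_succ' (x * y) (m + 1), pow_succ' (x * y) m, commutatorElement_def]
  generalize (x * y) ^ m = P
  group

namespace Quasimorphism

variable {H : Type*} [Group H] {f : H → ℝ}

def IsHomogeneous (f : H → ℝ) : Prop :=
  ∀ (x : H) (n : ℤ), f (x ^ n) = n * f x

theorem IsHomogeneous.map_pow (hf : IsHomogeneous f) (x : H) (n : ℕ) : f (x ^ n) = n * f x := by
  simpa using hf x n

theorem IsHomogeneous.map_one (hf : IsHomogeneous f) : f 1 = 0 := by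
  simpa using hf 1 0

theorem IsHomogeneous.map_inv (hf : IsHomogeneous f) (x : H) : f x⁻¹ = -f x := by
  simpa using hf x (-1)

theorem IsHomogeneous.apply_eq_of_abs_sub_le (hf : IsHomogeneous f) (φ : H →* H) {C : ℝ}
    (hφ : ∀ x, |f (φ x) - f x| ≤ C) (x : H) : f (φ x) = f x := by
  have hbound (n : ℕ) : n * |f (φ x) - f x| ≤ C := by
    calc n * |f (φ x) - f x| = |f (φ (x ^ n)) - f (x ^ n)| := by
          rw [_root_.map_pow, hf.map_pow, hf.map_pow, ← mul_sub, abs_mul, Nat.abs_cast]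
      _ ≤ C := hφ _
  have := nonpos_of_forall_nat_mul_le hbound
  linarith [abs_nonpos_iff.mp this]

theorem abs_apply_mul_inv_le {D : ℝ} (hq : ∀ a b, |f (a * b) - f a - f b| ≤ D) {x y : H}
    (hxy : f x = f y) (hy : f y⁻¹ = -f y) : |f (x * y⁻¹)| ≤ D := by
  simpa [hxy, hy] using hq x y⁻¹

theorem apply_mul_le {D : ℝ} (hq : ∀ a b, |f (a * b) - f a - f b| ≤ D) (a b : H) :
    f (a * b) ≤ f a + f b + D := by
  linarith [(abs_le.mp (hq a b)).2]

section Bavard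

variable {C D : ℝ} (hq : ∀ a b, |f (a * b) - f a - f b| ≤ D)
  (hconj : ∀ a b, f (a * b * a⁻¹) = f b) (hC : ∀ a b : H, f ⁅a, b⁆ ≤ C)
  (hf : IsHomogeneous f)
include hq hconj hC hf

theorem apply_pow_error_le (x y : H) (j : ℕ) :
    f ((x ^ (2 * j))⁻¹ * (x * y) ^ (2 * j) * (y ^ (2 * j))⁻¹) ≤ j * (C + D) := by
  induction j with
  | zero => simp [hf.map_one]
  | succ j ih =>
    rw [show 2 * (j + 1) = 2 * j + 2 by ring, conj_commutator_mul_conj_eq]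
    refine (apply_mul_le hq _ _).trans ?_
    rw [hconj, hconj]
    push_cast
    linarith [hC (x * y * x ^ (2 * j)) ((y ^ 2)⁻¹ * x⁻¹)]

theorem apply_mul_sub_le_half (x y : H) : f (x * y) - f x - f y ≤ (C + D) / 2 := by
  suffices h : ∀ j : ℕ, j * (2 * (f (x * y) - f x - f y) - (C + D)) ≤ 2 * D by
    linarith [nonpos_of_forall_nat_mul_le h]
  intro j
  set c := (x ^ (2 * j))⁻¹ * (x * y) ^ (2 * j) * (y ^ (2 * j))⁻¹
  have hdecomp : (x * y) ^ (2 * j) = x ^ (2 * j) * (c * y ^ (2 * j)) := by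
    simp only [c]
    group
  have h₁ := apply_mul_le hq (x ^ (2 * j)) (c * y ^ (2 * j))
  have h₂ := apply_mul_le hq c (y ^ (2 * j))
  rw [← hdecomp, hf.map_pow, hf.map_pow] at h₁
  rw [hf.map_pow] at h₂
  push_cast at h₁ h₂
  linarith [apply_pow_error_le hq hconj hC hf x y j]

theorem abs_apply_mul_sub_le_half (x y : H) : |f (x * y) - f x - f y| ≤ (C + D) / 2 := by
  have hswap : f (y * x) = f (x * y) := by
    rw [← hconj x (y * x)]
    group
  have h := apply_mul_sub_le_half hq hconj hC hf x⁻¹ y⁻¹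
  rw [← mul_inv_rev, hf.map_inv, hf.map_inv, hf.map_inv, hswap] at h
  exact abs_le.mpr ⟨by linarith, apply_mul_sub_le_half hq hconj hC hf x y⟩

end Bavard

theorem defect_le_of_commutator_le {C D : ℝ}
    (hD : IsLUB {r : ℝ | ∃ x y : H, r = |f (x * y) - f x - f y|} D)
    (hconj : ∀ a b, f (a * b * a⁻¹) = f b) (hf : IsHomogeneous f)
    (hC : ∀ a b : H, f ⁅a, b⁆ ≤ C) : D ≤ C := by
  have hq : ∀ a b, |f (a * b) - f a - f b| ≤ D := fun a b => hD.1 ⟨a, b, rfl⟩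
  have := hD.2 (by
    rintro r ⟨x, y, rfl⟩
    exact abs_apply_mul_sub_le_half hq hconj hC hf x y)
  linarith

theorem IsHomogeneous.apply_conj_eq {G : Type*} [Group G] {N : Subgroup G} (hN : N.Normal)
    {f : N → ℝ} (hf : IsHomogeneous f) {C : ℝ}
    (hC : ∀ (g : G) (x : N), |f ⟨g * x * g⁻¹, hN.conj_mem x x.2 g⟩ - f x| ≤ C)
    (g : G) (x : N) : f ⟨g * x * g⁻¹, hN.conj_mem x x.2 g⟩ = f x := by
  have hconj (y : N) :
      (MulAut.conjNormal g).toMonoidHom y = ⟨g * y * g⁻¹, hN.conj_mem y y.2 g⟩ :=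
    Subtype.ext (MulAut.conjNormal_apply g y)
  rw [← hconj]
  exact hf.apply_eq_of_abs_sub_le _ (fun y => hconj y ▸ hC g y) x

end Quasimorphism

open Quasimorphism in
/-- For a homogeneous `G`-quasi-invariant quasimorphism `f` on a normal subgroup `N`,
the defect `D(f)` equals the sup of `|f [h₁,h₂]|` over `h₁, h₂ ∈ N` and the sup of
`|f [g,h]|` over `g ∈ G`, `h ∈ N`; in particular `|f [g,h]| ≤ D(f)`. -/
theorem defect_eq_sup_commutators {G : Type*} [Group G] (N : Subgroup G) (hN : N.Normal)
    (f : N → ℝ) (D : ℝ)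
    (hD : IsLUB {r : ℝ | ∃ x y : N, r = |f (x * y) - f x - f y|} D)
    (hhom : ∀ (x : N) (n : ℤ), f (x ^ n) = n * f x)
    (hinv : ∃ D', ∀ (g : G) (x : N), |f ⟨g * x * g⁻¹, hN.conj_mem x x.2 g⟩ - f x| ≤ D') :
    IsLUB {r : ℝ | ∃ h₁ h₂ : N, r = |f ⁅h₁, h₂⁆|} D ∧
      IsLUB {r : ℝ | ∃ (g : G) (h : N),
        r = |f ⟨g * h * g⁻¹ * h⁻¹, mul_mem (hN.conj_mem h h.2 g) (inv_mem h.2)⟩|} D ∧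
      ∀ (g : G) (h : N),
        |f ⟨g * h * g⁻¹ * h⁻¹, mul_mem (hN.conj_mem h h.2 g) (inv_mem h.2)⟩| ≤ D := by
  obtain ⟨D', hD'⟩ := hinv
  have hq : ∀ a b : N, |f (a * b) - f a - f b| ≤ D := fun a b => hD.1 ⟨a, b, rfl⟩
  have hconjG := IsHomogeneous.apply_conj_eq hN hhom hD'
  have hcomm (g : G) (h : N) :
      |f ⟨g * h * g⁻¹ * h⁻¹, mul_mem (hN.conj_mem h h.2 g) (inv_mem h.2)⟩| ≤ D :=
    abs_apply_mul_inv_le hq (hconjG g h) (IsHomogeneous.map_inv hhom h)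
  have hle (C : ℝ) (hC : ∀ h₁ h₂ : N, |f ⁅h₁, h₂⁆| ≤ C) : D ≤ C :=
    defect_le_of_commutator_le hD (fun a b => hconjG a b) hhom fun a b =>
      (le_abs_self _).trans (hC a b)
  refine ⟨⟨?_, fun C hC => hle C fun h₁ h₂ => hC ⟨h₁, h₂, rfl⟩⟩,
    ⟨?_, fun C hC => hle C fun h₁ h₂ => hC ⟨h₁, h₂, rfl⟩⟩, hcomm⟩
  · rintro r ⟨h₁, h₂, rfl⟩
    exact hcomm h₁ h₂
  · rintro r ⟨g, h, rfl⟩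
    exact hcomm g h
end

section
/- Let G be a group, N a normal subgroup, and f : N → ℝ a homogeneous G-quasi-invariant quasimorphism with defect D(f). If x ∈ [G,N] can be written as a product of m commutators of the form [g,h] with g ∈ G, h ∈ N, then |f(x)| ≤ (2m - 1)·D(f). Consequently |f(x)| ≤ 2·D(f)·scl_{G,N}(x), where scl_{G,N}(x) = lim_{n→∞} cl_{G,N}(xⁿ)/n. -/
/-!
Two homogeneous functions at bounded distance coincide, so a homogeneous `G`-quasi-invariant
quasimorphism is exactly invariant under conjugation by `G`. Writing `[g,h] = (g h g⁻¹) · h⁻¹`,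
the defect inequality then gives `|f [g,h]| ≤ D`, and on a product of `m` such factors it adds
`D` per multiplication, whence `(2m - 1) D`. Applied to `xⁿ`, where `f (xⁿ) = n f x`, this gives
`n |f x| ≤ 2 D cl(xⁿ)`; dividing by `n` and letting `n → ∞` gives the bound by `2 D scl(x)`.
-/

open Filter Topology

variable {G : Type*} [Group G]

/-- `x` is a product of `m` `(G,N)`-commutators. -/
def IsCommProd (N : Subgroup G) (m : ℕ) (x : G) : Prop :=
  ∃ c : Fin m → G, (∀ i, ∃ g h : G, h ∈ N ∧ c i = g * h * g⁻¹ * h⁻¹) ∧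
    (List.ofFn c).prod = x

/-- The `(G,N)`-commutator length. -/
noncomputable def clGN (N : Subgroup G) (x : G) : ℕ :=
  sInf {m | IsCommProd N m x}

section Quasimorphism

variable {H : Type*} [Group H] {f : H → ℝ} {D : ℝ}

lemma abs_apply_list_prod_le (hD : ∀ x y, |f (x * y) - f x - f y| ≤ D) :
    ∀ l : List H, l ≠ [] → (∀ a ∈ l, |f a| ≤ D) → |f l.prod| ≤ (2 * l.length - 1) * D
  | [], h, _ => absurd rfl h
  | [a], _, hbound => by norm_num [hbound a List.mem_cons_self]
  | a :: b :: t, _, hbound => by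
    set p := (b :: t).prod
    have ih : |f p| ≤ (2 * (b :: t).length - 1) * D := abs_apply_list_prod_le hD (b :: t)
      (List.cons_ne_nil b t) fun c hc => hbound c (List.mem_cons_of_mem a hc)
    calc |f ((a :: b :: t).prod)| = |(f (a * p) - f a - f p) + f a + f p| := by
          rw [List.prod_cons]; congr 1; ring
      _ ≤ |f (a * p) - f a - f p| + |f a| + |f p| :=
          (abs_add_le _ _).trans (add_le_add_left (abs_add_le _ _) _)
      _ ≤ D + D + (2 * (b :: t).length - 1) * D :=
          add_le_add (add_le_add (hD a p) (hbound a List.mem_cons_self)) ih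
      _ = (2 * (a :: b :: t).length - 1) * D := by simp only [List.length_cons]; push_cast; ring

lemma eq_of_abs_sub_le_of_map_pow {f' : H → ℝ} (hf : ∀ x (n : ℕ), f (x ^ n) = n * f x)
    (hf' : ∀ x (n : ℕ), f' (x ^ n) = n * f' x) {C : ℝ} (hC : ∀ x, |f' x - f x| ≤ C) : f' = f := by
  funext x
  have hmul : ∀ n : ℕ, n * |f' x - f x| ≤ C := fun n => by
    simpa only [hf, hf', ← mul_sub, abs_mul, Nat.abs_cast] using hC (x ^ n)
  by_contra hne
  have hpos : 0 < |f' x - f x| := abs_pos.mpr (sub_ne_zero.mpr hne)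
  obtain ⟨n, hn⟩ := exists_nat_gt (C / |f' x - f x|)
  exact (hmul n).not_gt ((div_lt_iff₀ hpos).mp hn)

lemma abs_apply_mul_inv_le (hD : ∀ x y, |f (x * y) - f x - f y| ≤ D)
    (hinv : ∀ x, f x⁻¹ = -f x) {a b : H} (hab : f a = f b) : |f (a * b⁻¹)| ≤ D := by
  simpa [hab, hinv] using hD a b⁻¹

end Quasimorphism

namespace IsCommProd

variable {N : Subgroup G} {m k : ℕ} {x y : G}

lemma one : IsCommProd N 0 1 := ⟨finZeroElim, finZeroElim, rfl⟩

lemma eq_one (h : IsCommProd N 0 x) : x = 1 := by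
  obtain ⟨c, -, rfl⟩ := h
  rfl

lemma mul (hx : IsCommProd N m x) (hy : IsCommProd N k y) : IsCommProd N (m + k) (x * y) := by
  obtain ⟨c, hc, rfl⟩ := hx
  obtain ⟨d, hd, rfl⟩ := hy
  exact ⟨Fin.append c d, Fin.addCases (by simpa using hc) (by simpa using hd),
    by simp [List.ofFn_fin_append]⟩

lemma pow (h : IsCommProd N m x) : ∀ n : ℕ, IsCommProd N (n * m) (x ^ n)
  | 0 => by simpa using one
  | n + 1 => by rw [pow_succ, add_one_mul]; exact (h.pow n).mul h

lemma exists_list [N.Normal] (h : IsCommProd N m x) :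
    ∃ l : List N, l.length = m ∧ (∀ a ∈ l, ∃ (g : G) (b : N), a = MulAut.conjNormal g b * b⁻¹) ∧
      (l.prod : G) = x := by
  obtain ⟨c, hc, rfl⟩ := h
  choose g b hb hc using hc
  refine ⟨List.ofFn fun i => MulAut.conjNormal (g i) ⟨b i, hb i⟩ * ⟨b i, hb i⟩⁻¹, by simp, ?_, ?_⟩
  · simp only [List.mem_ofFn]
    rintro a ⟨i, rfl⟩
    exact ⟨g i, _, rfl⟩
  · rw [SubmonoidClass.coe_list_prod, List.map_ofFn]
    congr 2
    funext i
    simp [MulAut.conjNormal_apply, hc]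

end IsCommProd

section HomogeneousQuasimorphism

variable {N : Subgroup G} [N.Normal] {f : N → ℝ} {D : ℝ}

lemma apply_conjNormal_eq (hhom : ∀ (x : N) (n : ℤ), f (x ^ n) = n * f x)
    (hinv : ∃ C, ∀ (g : G) (x : N), |f (MulAut.conjNormal g x) - f x| ≤ C) (g : G) (x : N) :
    f (MulAut.conjNormal g x) = f x := by
  obtain ⟨C, hC⟩ := hinv
  have hpow : ∀ (y : N) (n : ℕ), f (y ^ n) = n * f y := fun y n => by simpa using hhom y n
  exact congrFun (eq_of_abs_sub_le_of_map_pow (f' := f ∘ MulAut.conjNormal g) hpow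
    (fun y n => by simp [map_pow, hpow]) (hC g)) x

lemma abs_apply_le_of_isCommProd (hD : ∀ x y, |f (x * y) - f x - f y| ≤ D)
    (hhom : ∀ (x : N) (n : ℤ), f (x ^ n) = n * f x)
    (hconj : ∀ (g : G) (x : N), f (MulAut.conjNormal g x) = f x)
    {m : ℕ} (hm : 0 < m) {x : N} (hx : IsCommProd N m x) : |f x| ≤ (2 * m - 1) * D := by
  obtain ⟨l, rfl, hl, hprod⟩ := hx.exists_list
  have hinv : ∀ y : N, f y⁻¹ = -f y := fun y => by simpa using hhom y (-1)
  rw [← Subtype.ext hprod]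
  refine abs_apply_list_prod_le hD l (List.length_pos_iff.mp hm) ?_
  rintro _ ha
  obtain ⟨g, b, rfl⟩ := hl _ ha
  exact abs_apply_mul_inv_le hD hinv (hconj g b)

lemma abs_apply_le_two_mul_clGN (hD : ∀ x y, |f (x * y) - f x - f y| ≤ D)
    (hhom : ∀ (x : N) (n : ℤ), f (x ^ n) = n * f x)
    (hconj : ∀ (g : G) (x : N), f (MulAut.conjNormal g x) = f x)
    {m : ℕ} {x : N} (hx : IsCommProd N m x) : |f x| ≤ 2 * D * clGN N x := by
  have hcl : IsCommProd N (clGN N x) x := Nat.sInf_mem (s := {k | IsCommProd N k x}) ⟨m, hx⟩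
  rcases Nat.eq_zero_or_pos (clGN N x) with h0 | hpos
  · have hx1 : x = 1 := Subtype.ext (h0 ▸ hcl).eq_one
    have hf1 : f 1 = 0 := by simpa using hhom 1 0
    rw [h0, hx1, hf1]
    simp
  · have hD0 : 0 ≤ D := (abs_nonneg _).trans (hD 1 1)
    calc |f x| ≤ (2 * clGN N x - 1) * D := abs_apply_le_of_isCommProd hD hhom hconj hpos hcl
      _ ≤ 2 * D * clGN N x := by linarith

end HomogeneousQuasimorphism

theorem abs_le_of_commProd_general (N : Subgroup G) (hN : N.Normal)
    (f : N → ℝ) (D : ℝ)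
    (hD : ∀ x y : N, |f (x * y) - f x - f y| ≤ D)
    (hhom : ∀ (x : N) (n : ℤ), f (x ^ n) = n * f x)
    (hinv : ∃ D', ∀ (g : G) (x : N), |f ⟨g * x * g⁻¹, hN.conj_mem x x.2 g⟩ - f x| ≤ D')
    (x : N)
    (m : ℕ) (hm : 0 < m) (hxm : IsCommProd N m (x : G))
    (L : ℝ)
    (hL : Tendsto (fun n : ℕ => (clGN N ((x : G) ^ n) : ℝ) / n) atTop (𝓝 L)) :
    |f x| ≤ (2 * (m : ℝ) - 1) * D ∧ |f x| ≤ 2 * D * L := by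
  have hconj : ∀ (g : G) (y : N), f (MulAut.conjNormal g y) = f y := by
    obtain ⟨C, hC⟩ := hinv
    refine apply_conjNormal_eq hhom ⟨C, fun g y => ?_⟩
    simpa only [← MulAut.conjNormal_apply] using hC g y
  refine ⟨abs_apply_le_of_isCommProd hD hhom hconj hm hxm, ge_of_tendsto (hL.const_mul (2 * D)) ?_⟩
  filter_upwards [eventually_gt_atTop 0] with n hn
  have hpow := abs_apply_le_two_mul_clGN hD hhom hconj (x := x ^ n) (by simpa using hxm.pow n)
  rw [← zpow_natCast, hhom, abs_mul] at hpow
  rw [mul_div_assoc', le_div_iff₀ (by positivity)]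
  simpa [mul_comm] using hpow

/-- For a homogeneous `G`-quasi-invariant quasimorphism `f` with defect at most `D`:
if `x ∈ [G,N]` is a product of `m ≥ 1` `(G,N)`-commutators then `|f x| ≤ (2m-1)·D`, and
consequently `|f x| ≤ 2·D·scl_{G,N}(x)`. -/
theorem abs_le_of_commProd (N : Subgroup G) (hN : N.Normal)
    (f : N → ℝ) (D : ℝ)
    (hD : ∀ x y : N, |f (x * y) - f x - f y| ≤ D)
    (hhom : ∀ (x : N) (n : ℤ), f (x ^ n) = n * f x)
    (hinv : ∃ D', ∀ (g : G) (x : N), |f ⟨g * x * g⁻¹, hN.conj_mem x x.2 g⟩ - f x| ≤ D')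
    (x : N) (hx : (x : G) ∈ ⁅(⊤ : Subgroup G), N⁆)
    (m : ℕ) (hm : 0 < m) (hxm : IsCommProd N m (x : G))
    (L : ℝ)
    (hL : Tendsto (fun n : ℕ => (clGN N ((x : G) ^ n) : ℝ) / n) atTop (𝓝 L)) :
    |f x| ≤ (2 * (m : ℝ) - 1) * D ∧ |f x| ≤ 2 * D * L :=
  abs_le_of_commProd_general N hN f D hD hhom hinv x m hm hxm L hL
end

section
/- Let G be a group and N a normal subgroup, with q : G → G/N the projection. Suppose there is a subgroup Λ ≤ G/N of finite index and a homomorphism s : Λ → G with q ∘ s = id_Λ. Then for every G-invariant quasimorphism f on N (with |f(gxg⁻¹)-f(x)| ≤ D'(f) for all g ∈ G, x ∈ N), there exists a quasimorphism f' on G with f'|_N = f and D(f') ≤ D(f) + 3·D'(f). In particular, if f is homogeneous (hence G-invariant), f extends to a quasimorphism f' on G with D(f') ≤ D(f). -/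
/-!
Let `K ≤ G` be the preimage of `Λ`; it has finite index and the section splits it as `N ⋊ Λ`.
Composing `f` with the projection `k ↦ k · s(k̄)⁻¹` onto `N` gives a quasimorphism on `K` of
defect `D + D'`. Averaging it over the cosets of `K` (the transfer) gives a quasimorphism `φ` on
`G` with the same defect, and for `x ∈ N` every summand is `f` of a conjugate of `x`, so
`|φ x - f x| ≤ D'`. Redefining `φ` to be `f` on `N` costs one more `D'`. If `f` is homogeneous,
`n · |f (g x g⁻¹) - f x| ≤ D'` for all `n`, so `f` is `G`-invariant and the bound drops
to `D`.
-/

open scoped BigOperators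

theorem abs_expect_le_of_forall_abs_le {ι : Type*} [Fintype ι] [Nonempty ι] {u : ι → ℝ}
    {δ : ℝ} (h : ∀ i, |u i| ≤ δ) : |𝔼 i, u i| ≤ δ :=
  (Finset.abs_expect_le _ _).trans <|
    (Finset.expect_le_expect fun i _ => h i).trans_eq (Fintype.expect_const δ)

theorem map_eq_of_homogeneous_of_abs_sub_le {H : Type*} [Group H] {f : H → ℝ}
    (hf : ∀ (x : H) (n : ℕ), f (x ^ n) = n * f x) (c : H →* H) {C : ℝ}
    (hc : ∀ x, |f (c x) - f x| ≤ C) (x : H) : f (c x) = f x := by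
  by_contra hne
  obtain ⟨n, hn⟩ := Archimedean.arch (C + 1) (abs_pos.mpr (sub_ne_zero.mpr hne))
  have := hc (x ^ n)
  rw [map_pow, hf, hf, ← mul_sub, abs_mul, Nat.abs_cast, ← nsmul_eq_mul] at this
  linarith

namespace Subgroup

variable {G : Type*} [Group G]

section Transfer

variable (K : Subgroup G)

noncomputable def transferCocycle (g : G) (C : G ⧸ K) : K :=
  ⟨(g • C).out⁻¹ * (g * C.out), QuotientGroup.eq.mp <| by
    rw [QuotientGroup.out_eq', ← smul_eq_mul, MulAction.Quotient.coe_smul_out]⟩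

theorem transferCocycle_mul (a b : G) (C : G ⧸ K) :
    transferCocycle K (a * b) C = transferCocycle K a (b • C) * transferCocycle K b C := by
  ext
  simp only [transferCocycle, coe_mul, mul_smul]
  group

theorem coe_transferCocycle_of_mem_normalCore {x : G} (hx : x ∈ K.normalCore) (C : G ⧸ K) :
    (transferCocycle K x C : G) = C.out⁻¹ * x * C.out := by
  have hfix : x • C = C :=
    Equiv.Perm.ext_iff.mp (MonoidHom.mem_ker.mp (K.normalCore_eq_ker ▸ hx)) C
  simp only [transferCocycle, hfix, mul_assoc]

noncomputable def transferAvg [Fintype (G ⧸ K)] (ψ : K → ℝ) (g : G) : ℝ :=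
  𝔼 C, ψ (transferCocycle K g C)

variable [Fintype (G ⧸ K)] {ψ : K → ℝ}

theorem abs_transferAvg_mul_sub_le {E : ℝ} (hψ : ∀ x y : K, |ψ (x * y) - ψ x - ψ y| ≤ E)
    (a b : G) : |transferAvg K ψ (a * b) - transferAvg K ψ a - transferAvg K ψ b| ≤ E := by
  have hshift : transferAvg K ψ a = 𝔼 C, ψ (transferCocycle K a (b • C)) :=
    (Fintype.expect_equiv (MulAction.toPerm b) _ _ fun _ => rfl).symm
  rw [hshift, transferAvg, transferAvg, ← Finset.expect_sub_distrib,
    ← Finset.expect_sub_distrib]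
  refine abs_expect_le_of_forall_abs_le fun C => ?_
  rw [transferCocycle_mul]
  exact hψ _ _

theorem abs_transferAvg_sub_le_of_mem_normalCore {x : G} (hx : x ∈ K.normalCore) {y δ : ℝ}
    (h : ∀ (g : G) (hg : g * x * g⁻¹ ∈ K), |ψ ⟨g * x * g⁻¹, hg⟩ - y| ≤ δ) :
    |transferAvg K ψ x - y| ≤ δ := by
  rw [transferAvg, ← Fintype.expect_const (ι := G ⧸ K) y, ← Finset.expect_sub_distrib]
  refine abs_expect_le_of_forall_abs_le fun C => ?_
  convert h C.out⁻¹ (hx C.out⁻¹) using 4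
  ext
  simp [coe_transferCocycle_of_mem_normalCore K hx]

end Transfer

section Extension

variable (N : Subgroup G)

open Classical in
noncomputable def extendWith (f : N → ℝ) (φ : G → ℝ) (g : G) : ℝ :=
  if hg : g ∈ N then f ⟨g, hg⟩ else φ g

variable {N} {f : N → ℝ} {φ : G → ℝ}

@[simp]
theorem extendWith_coe (x : N) : N.extendWith f φ x = f x := by
  simp [extendWith]

theorem extendWith_of_notMem {g : G} (hg : g ∉ N) : N.extendWith f φ g = φ g := by
  simp [extendWith, hg]

/-- A product with exactly one factor in `N` lies outside `N`, so a defect mixing `f` and `φ`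
contains two values of `φ` and one of `f`: it pays the closeness bound `δ` only once. -/
theorem abs_extendWith_mul_sub_le {D E δ : ℝ} (hf : ∀ x y : N, |f (x * y) - f x - f y| ≤ D)
    (hφ : ∀ a b : G, |φ (a * b) - φ a - φ b| ≤ E) (hclose : ∀ x : N, |φ x - f x| ≤ δ)
    (a b : G) :
    |N.extendWith f φ (a * b) - N.extendWith f φ a - N.extendWith f φ b| ≤ max D (E + δ) := by
  have hδ : 0 ≤ δ := (abs_nonneg _).trans (hclose 1)
  have hab := abs_sub_le_iff.mp (hφ a b)
  by_cases ha : a ∈ N <;> by_cases hb : b ∈ N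
  · lift a to N using ha
    lift b to N using hb
    rw [← coe_mul, extendWith_coe, extendWith_coe, extendWith_coe]
    exact le_max_of_le_left (hf a b)
  · have hab' : a * b ∉ N := fun h => hb (by simpa using N.mul_mem (N.inv_mem ha) h)
    lift a to N using ha
    rw [extendWith_of_notMem hab', extendWith_coe, extendWith_of_notMem hb]
    have := abs_sub_le_iff.mp (hclose a)
    exact le_max_of_le_right (abs_sub_le_iff.mpr ⟨by linarith, by linarith⟩)
  · have hab' : a * b ∉ N := fun h => ha (by simpa using N.mul_mem h (N.inv_mem hb))
    lift b to N using hb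
    rw [extendWith_of_notMem hab', extendWith_coe, extendWith_of_notMem ha]
    have := abs_sub_le_iff.mp (hclose b)
    exact le_max_of_le_right (abs_sub_le_iff.mpr ⟨by linarith, by linarith⟩)
  · rw [extendWith_of_notMem ha, extendWith_of_notMem hb]
    by_cases hab' : a * b ∈ N
    · have := abs_sub_le_iff.mp (hclose ⟨a * b, hab'⟩)
      rw [show a * b = ((⟨a * b, hab'⟩ : N) : G) from rfl, extendWith_coe]
      exact le_max_of_le_right (abs_sub_le_iff.mpr ⟨by linarith, by linarith⟩)
    · rw [extendWith_of_notMem hab']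
      exact le_max_of_le_right ((hφ a b).trans (by linarith))

end Extension

section Splitting

variable {N : Subgroup G} {K : Subgroup G} {σ : K →* G}
  (hσ : ∀ k : K, (k : G) * (σ k)⁻¹ ∈ N)

def normalPart (k : K) : N :=
  ⟨k * (σ k)⁻¹, hσ k⟩

theorem normalPart_mul [hN : N.Normal] (k₁ k₂ : K) :
    normalPart hσ (k₁ * k₂) =
      normalPart hσ k₁ *
        ⟨σ k₁ * normalPart hσ k₂ * (σ k₁)⁻¹, hN.conj_mem _ (normalPart hσ k₂).2 _⟩ := by
  ext
  simp only [normalPart, coe_mul, map_mul]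
  group

theorem normalPart_of_map_eq_one {k : K} (hk : σ k = 1) : (normalPart hσ k : G) = k := by
  simp [normalPart, hk]

theorem abs_comp_normalPart_mul_sub_le [hN : N.Normal] {f : N → ℝ} {D D' : ℝ}
    (hD : ∀ x y : N, |f (x * y) - f x - f y| ≤ D)
    (hD' : ∀ (g : G) (x : N), |f ⟨g * x * g⁻¹, hN.conj_mem x x.2 g⟩ - f x| ≤ D')
    (k₁ k₂ : K) :
    |f (normalPart hσ (k₁ * k₂)) - f (normalPart hσ k₁) - f (normalPart hσ k₂)|
      ≤ D + D' := by
  rw [normalPart_mul]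
  have h₁ := abs_sub_le_iff.mp
    (hD (normalPart hσ k₁) ⟨_, hN.conj_mem _ (normalPart hσ k₂).2 (σ k₁)⟩)
  have h₂ := abs_sub_le_iff.mp (hD' (σ k₁) (normalPart hσ k₂))
  exact abs_sub_le_iff.mpr ⟨by linarith, by linarith⟩

end Splitting

theorem exists_extension_of_abs_conj_sub_le {N : Subgroup G} [hN : N.Normal]
    {Λ : Subgroup (G ⧸ N)} [Λ.FiniteIndex] {s : Λ →* G}
    (hs : ∀ l : Λ, QuotientGroup.mk' N (s l) = (l : G ⧸ N)) {f : N → ℝ} {D D' : ℝ}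
    (hD : ∀ x y : N, |f (x * y) - f x - f y| ≤ D)
    (hD' : ∀ (g : G) (x : N), |f ⟨g * x * g⁻¹, hN.conj_mem x x.2 g⟩ - f x| ≤ D') :
    ∃ f' : G → ℝ, (∀ x : N, f' x = f x) ∧
      ∀ a b : G, |f' (a * b) - f' a - f' b| ≤ D + 2 * D' := by
  have : (Λ.comap (QuotientGroup.mk' N)).FiniteIndex := ⟨by
    rw [index_comap_of_surjective (H := Λ) (QuotientGroup.mk'_surjective N)]
    exact FiniteIndex.index_ne_zero⟩
  set K := Λ.comap (QuotientGroup.mk' N)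
  let _ : Fintype (G ⧸ K) := Fintype.ofFinite _
  set σ : K →* G := s.comp ((QuotientGroup.mk' N).subgroupComap Λ)
  have hσ : ∀ k : K, (k : G) * (σ k)⁻¹ ∈ N := fun k => by
    rw [← QuotientGroup.eq_one_iff, ← QuotientGroup.mk'_apply, map_mul, map_inv,
      MonoidHom.comp_apply, hs]
    exact mul_inv_cancel _
  have hσN : ∀ k : K, (k : G) ∈ N → σ k = 1 := fun k hk => by
    have : (QuotientGroup.mk' N).subgroupComap Λ k = 1 :=
      Subtype.ext ((QuotientGroup.eq_one_iff _).mpr hk)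
    simp [σ, this]
  have hNK : N ≤ K.normalCore := normal_le_normalCore.mpr
    ((QuotientGroup.ker_mk' N).symm.le.trans (MonoidHom.ker_le_comap _ _))
  set φ := K.transferAvg (f ∘ normalPart hσ)
  have hφ := abs_transferAvg_mul_sub_le (ψ := f ∘ normalPart hσ) K
    (abs_comp_normalPart_mul_sub_le hσ hD hD')
  have hclose : ∀ x : N, |φ x - f x| ≤ D' := fun x =>
    abs_transferAvg_sub_le_of_mem_normalCore K (hNK x.2) fun g hg => by
      convert hD' g x using 4
      exact congrArg f (Subtype.ext (normalPart_of_map_eq_one hσ (hσN _ (hN.conj_mem x x.2 g))))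
  have hD'_nonneg : 0 ≤ D' := (abs_nonneg _).trans (hD' 1 1)
  exact ⟨N.extendWith f φ, extendWith_coe, fun a b =>
    (abs_extendWith_mul_sub_le hD hφ hclose a b).trans (max_le (by linarith) (by linarith))⟩

theorem eq_of_homogeneous_of_abs_conj_sub_le {N : Subgroup G} [hN : N.Normal] {f : N → ℝ}
    (hf : ∀ (x : N) (n : ℤ), f (x ^ n) = n * f x) {C : ℝ}
    (hC : ∀ (g : G) (x : N), |f ⟨g * x * g⁻¹, hN.conj_mem x x.2 g⟩ - f x| ≤ C)
    (g : G) (x : N) :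
    f ⟨g * x * g⁻¹, hN.conj_mem x x.2 g⟩ = f x := by
  have hconj (y : N) :
      (MulAut.conjNormal g).toMonoidHom y = ⟨g * y * g⁻¹, hN.conj_mem y y.2 g⟩ :=
    Subtype.ext (MulAut.conjNormal_apply g y)
  rw [← hconj]
  exact map_eq_of_homogeneous_of_abs_sub_le (f := f) (fun y n => by exact_mod_cast hf y n) _
    (fun y => by simpa only [hconj] using hC g y) x

end Subgroup

/-- Extension theorem for `G`-(quasi-)invariant quasimorphisms under a virtual splitting:
if `Λ ≤ G/N` has finite index and admits a homomorphic section `s : Λ → G`, then every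
`G`-quasi-invariant quasimorphism `f` on `N` extends to a quasimorphism `f'` on `G` with
`D(f') ≤ D(f) + 3·D'(f)`; if moreover `f` is homogeneous, the extension can be chosen
with `D(f') ≤ D(f)`. -/
theorem extension_theorem {G : Type*} [Group G] (N : Subgroup G) [hN : N.Normal]
    (Λ : Subgroup (G ⧸ N)) [Λ.FiniteIndex] (s : Λ →* G)
    (hs : ∀ l : Λ, QuotientGroup.mk' N (s l) = (l : G ⧸ N))
    (f : N → ℝ) (D D' : ℝ)
    (hD : ∀ x y : N, |f (x * y) - f x - f y| ≤ D)
    (hD' : ∀ (g : G) (x : N), |f ⟨g * x * g⁻¹, hN.conj_mem x x.2 g⟩ - f x| ≤ D') :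
    (∃ f' : G → ℝ, (∀ x : N, f' x = f x) ∧
        ∀ a b : G, |f' (a * b) - f' a - f' b| ≤ D + 3 * D') ∧
      ((∀ (x : N) (n : ℤ), f (x ^ n) = n * f x) →
        ∃ f' : G → ℝ, (∀ x : N, f' x = f x) ∧
          ∀ a b : G, |f' (a * b) - f' a - f' b| ≤ D) := by
  refine ⟨?_, fun hhom => ?_⟩
  · obtain ⟨f', hf', hdef⟩ := Subgroup.exists_extension_of_abs_conj_sub_le hs hD hD'
    have hD'_nonneg : 0 ≤ D' := (abs_nonneg _).trans (hD' 1 1)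
    exact ⟨f', hf', fun a b => (hdef a b).trans (by linarith)⟩
  · have hinv (g : G) (x : N) : |f ⟨g * x * g⁻¹, hN.conj_mem x x.2 g⟩ - f x| ≤ 0 := by
      rw [Subgroup.eq_of_homogeneous_of_abs_conj_sub_le hhom hD' g x, sub_self, abs_zero]
    simpa using Subgroup.exists_extension_of_abs_conj_sub_le hs hD hinv
end

section
/- Let G be a finitely generated group and N a normal subgroup of finite index. Then the quotient group [G,G]/[G,N] is finite. -/
/-!
Modulo `[G, N]` the subgroup `N` becomes central, so the centre of `G ⧸ [G, N]` has finite index.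
A commutator only depends on its arguments modulo the centre, so `G ⧸ [G, N]` has finitely many
commutators, and by Schur's theorem its derived subgroup, the image of `[G, G]`, is finite.
-/

open Subgroup QuotientGroup
open scoped commutatorElement

section

variable {G : Type*} [Group G]

theorem commutatorElement_mul_mem_center_left {z : G} (hz : z ∈ center G) (g h : G) :
    ⁅g * z, h⁆ = ⁅g, h⁆ := by
  calc ⁅g * z, h⁆ = g * (z * h) * z⁻¹ * g⁻¹ * h⁻¹ := by group
    _ = g * (h * z) * z⁻¹ * g⁻¹ * h⁻¹ := by rw [mem_center_iff.mp hz h]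
    _ = ⁅g, h⁆ := by group

theorem commutatorElement_mul_mem_center_right {z : G} (hz : z ∈ center G) (g h : G) :
    ⁅g, h * z⁆ = ⁅g, h⁆ := by
  rw [← commutatorElement_inv, commutatorElement_mul_mem_center_left hz, commutatorElement_inv]

theorem finite_commutatorSet_of_finiteIndex_center [(center G).FiniteIndex] :
    Finite (commutatorSet G) := by
  refine Set.Finite.subset (Set.finite_range
    fun p : (G ⧸ center G) × (G ⧸ center G) ↦ ⁅p.1.out, p.2.out⁆) ?_
  rintro _ ⟨g, h, rfl⟩
  obtain ⟨z, hg⟩ := mk_out_eq_mul (center G) g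
  obtain ⟨w, hh⟩ := mk_out_eq_mul (center G) h
  refine ⟨((g : G ⧸ center G), (h : G ⧸ center G)), ?_⟩
  dsimp only
  rw [hg, hh, commutatorElement_mul_mem_center_left z.2, commutatorElement_mul_mem_center_right w.2]

theorem finite_commutator_of_finiteIndex_center [(center G).FiniteIndex] :
    Finite (commutator G) :=
  have := finite_commutatorSet_of_finiteIndex_center (G := G)
  inferInstance

theorem map_mk'_le_center {N H : Subgroup G} [H.Normal] (hNH : ⁅(⊤ : Subgroup G), N⁆ ≤ H) :
    N.map (mk' H) ≤ center (G ⧸ H) := by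
  rw [← commutator_top_left_eq_bot_iff_le_center, ← map_top_of_surjective _ (mk'_surjective H),
    ← map_commutator, Subgroup.map_eq_bot_iff, ker_mk']
  exact hNH

variable {G' : Type*} [Group G'] {f : G →* G'}

theorem finiteIndex_map_of_surjective {N : Subgroup G} [N.FiniteIndex]
    (hf : Function.Surjective f) (hker : f.ker ≤ N) : (N.map f).FiniteIndex :=
  ⟨by rw [index_map_eq N hf hker]; exact FiniteIndex.index_ne_zero⟩

theorem map_commutator_of_surjective (hf : Function.Surjective f) :
    (commutator G).map f = commutator G' := by
  rw [commutator_def, map_commutator, map_top_of_surjective f hf, commutator_def]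

noncomputable def quotientSubgroupOfEquivMapMk' (H K : Subgroup G) [H.Normal] :
    K ⧸ H.subgroupOf K ≃* K.map (mk' H) :=
  (quotientMulEquivOfEq (by rw [← MonoidHom.comap_ker, ker_mk']; rfl)).trans
    ((quotientKerEquivRange ((mk' H).comp K.subtype)).trans
      (MulEquiv.subgroupCongr (by rw [MonoidHom.range_comp, range_subtype])))

end

theorem commutator_quot_finite_general {G : Type*} [Group G]
    (N : Subgroup G) [N.Normal] [N.FiniteIndex] :
    Finite ((⁅(⊤ : Subgroup G), (⊤ : Subgroup G)⁆ : Subgroup G) ⧸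
      (⁅(⊤ : Subgroup G), N⁆.subgroupOf ⁅(⊤ : Subgroup G), (⊤ : Subgroup G)⁆)) := by
  set H := ⁅(⊤ : Subgroup G), N⁆
  have : (N.map (mk' H)).FiniteIndex :=
    finiteIndex_map_of_surjective (mk'_surjective H)
      ((ker_mk' H).trans_le (commutator_le_right ⊤ N))
  have : (center (G ⧸ H)).FiniteIndex := finiteIndex_of_le (map_mk'_le_center le_rfl)
  have : Finite ((commutator G).map (mk' H)) := by
    rw [map_commutator_of_surjective (mk'_surjective H)]
    exact finite_commutator_of_finiteIndex_center
  exact Finite.of_equiv _ (quotientSubgroupOfEquivMapMk' H (commutator G)).symm.toEquiv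

/-- If `G` is finitely generated and `N` is a normal subgroup of finite index,
then `[G,G]/[G,N]` is finite. -/
theorem commutator_quot_finite {G : Type*} [Group G] [Group.FG G]
    (N : Subgroup G) [N.Normal] [N.FiniteIndex] :
    Finite ((⁅(⊤ : Subgroup G), (⊤ : Subgroup G)⁆ : Subgroup G) ⧸
      (⁅(⊤ : Subgroup G), N⁆.subgroupOf ⁅(⊤ : Subgroup G), (⊤ : Subgroup G)⁆)) :=
  commutator_quot_finite_general N
end

section
/- Let G be a group and N a normal subgroup with N finitely generated, and suppose the projection q : G → G/N virtually splits (there exist a finite-index subgroup Λ ≤ G/N and a homomorphism s : Λ → G with q∘s = id_Λ). Then the group ([G,G] ∩ N)/[G,N] is finite. -/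
/-!
Put `L = [G,N]` and `π : G → G/L`. The image `π N` is central, so it is a finitely generated abelian
group, and it suffices to show that `π([G,G] ∩ N)` has exponent dividing `n = [G/N : Λ]`.
The preimage of `Λ` maps onto a subgroup `H` of index `n` with `H ≤ π(s Λ) ⊔ π N`; as `π N` is
central and meets `π(s Λ)` trivially, `[H,H] ∩ π N = 1`. Finally, for a central `x ∈ [G/L, G/L]` the
transfer to `H^ab` sends `x` to the class of `x^n` but kills `x`, so `x^n ∈ [H,H]`.
-/

open Subgroup
open scoped commutatorElement

section

variable {C : Type*} [Group C]

lemma commutatorElement_mul_mul_of_mem_center {a b z w : C} (hz : z ∈ center C)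
    (hw : w ∈ center C) : ⁅a * z, b * w⁆ = ⁅a, b⁆ := by
  have hz' := mem_center_iff.mp hz
  have hw' := mem_center_iff.mp hw
  simp only [commutatorElement_def, mul_inv_rev]
  calc a * z * (b * w) * (z⁻¹ * a⁻¹) * (w⁻¹ * b⁻¹)
      = a * (z * (b * w)) * z⁻¹ * a⁻¹ * w⁻¹ * b⁻¹ := by group
    _ = a * b * (w * a⁻¹) * w⁻¹ * b⁻¹ := by rw [← hz' (b * w)]; group
    _ = a * b * a⁻¹ * b⁻¹ := by rw [← hw' a⁻¹]; group

lemma Subgroup.normal_of_le_center {A : Subgroup C} (hA : A ≤ center C) : A.Normal :=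
  ⟨fun a ha g => by rwa [mem_center_iff.mp (hA ha) g, mul_inv_cancel_right]⟩

lemma Subgroup.commutator_sup_le_of_le_center (S : Subgroup C) {A : Subgroup C}
    (hA : A ≤ center C) : ⁅S ⊔ A, S ⊔ A⁆ ≤ ⁅S, S⁆ := by
  have := normal_of_le_center hA
  rw [commutator_le]
  intro g₁ h₁ g₂ h₂
  obtain ⟨a, ha, z, hz, rfl⟩ := mem_sup_of_normal_right.mp h₁
  obtain ⟨b, hb, w, hw, rfl⟩ := mem_sup_of_normal_right.mp h₂
  rw [commutatorElement_mul_mul_of_mem_center (hA hz) (hA hw)]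
  exact commutator_mem_commutator ha hb

lemma Subgroup.pow_index_mem_commutator_of_mem_center (H : Subgroup C) [H.FiniteIndex] {x : C}
    (hxZ : x ∈ center C) (hx : x ∈ _root_.commutator C) : x ^ H.index ∈ ⁅H, H⁆ := by
  have key (k : ℕ) (g : C) (_ : g⁻¹ * x ^ k * g ∈ H) : g⁻¹ * x ^ k * g = x ^ k := by
    rw [mul_assoc, ← mem_center_iff.mp (pow_mem hxZ k) g, inv_mul_cancel_left]
  have h := (Abelianization.of : H →* Abelianization H).transfer_eq_pow x key
  rw [Abelianization.commutator_subset_ker _ hx, eq_comm, ← MonoidHom.mem_ker,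
    Abelianization.ker_of] at h
  rw [← map_subtype_commutator]
  exact ⟨_, h, rfl⟩

lemma Subgroup.pow_index_eq_one_of_mem_commutator {H S A : Subgroup C} [H.FiniteIndex]
    (hA : A ≤ center C) (hH : H ≤ S ⊔ A) (hSA : S ⊓ A = ⊥) {x : C} (hxA : x ∈ A)
    (hx : x ∈ _root_.commutator C) : x ^ H.index = 1 := by
  have hS : x ^ H.index ∈ S :=
    (commutator_le_self S) (commutator_sup_le_of_le_center S hA
      (commutator_mono hH hH (H.pow_index_mem_commutator_of_mem_center (hA hxA) hx)))
  rw [← mem_bot, ← hSA]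
  exact ⟨hS, pow_mem hxA _⟩

lemma Subgroup.fg_of_commGroup {A : Type*} [CommGroup A] [Group.FG A] (B : Subgroup A) :
    Group.FG B := by
  have : Module.Finite ℤ (Additive A) := Module.Finite.iff_addGroup_fg.mpr inferInstance
  have h := IsNoetherian.noetherian (AddSubgroup.toIntSubmodule B.toAddSubgroup)
  rw [Submodule.fg_iff_addSubgroup_fg, AddSubgroup.toIntSubmodule_toAddSubgroup] at h
  rwa [Group.fg_iff_subgroup_fg, Subgroup.fg_iff_add_fg]

open scoped IsMulCommutative in
lemma Subgroup.finite_of_le_of_le_center {A M : Subgroup C} [Group.FG A] (hA : A ≤ center C)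
    (hMA : M ≤ A) (hM : IsMulTorsion M) : Finite M := by
  have : IsMulCommutative A := ⟨⟨fun a b => Subtype.ext (mem_center_iff.mp (hA a.2) b).symm⟩⟩
  have := (M.subgroupOf A).fg_of_commGroup
  let e := subgroupOfEquivOfLe hMA
  have := CommGroup.finite_of_fg_isMulTorsion _
    (hM.of_surjective (f := e.symm.toMonoidHom) e.symm.surjective)
  exact Finite.of_equiv _ e.toEquiv

end

section

variable {G : Type*} [Group G] (N : Subgroup G) [N.Normal]

open QuotientGroup

lemma Subgroup.map_mk'_le_center_quotient_commutator :
    N.map (mk' ⁅(⊤ : Subgroup G), N⁆) ≤ center (G ⧸ ⁅(⊤ : Subgroup G), N⁆) := by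
  rw [← commutator_top_left_eq_bot_iff_le_center, ← map_top_of_surjective _ (mk'_surjective _),
    ← map_commutator, map_eq_bot_iff, ker_mk']

variable (Λ : Subgroup (G ⧸ N)) (s : Λ →* G) (hs : ∀ l : Λ, QuotientGroup.mk' N (s l) = l)
include hs

lemma eq_one_of_section_mem {l : Λ} (hl : s l ∈ N) : l = 1 :=
  Subtype.ext <| by rw [← hs l, OneMemClass.coe_one]; exact (eq_one_iff _).mpr hl

lemma comap_mk'_le_range_sup : Λ.comap (mk' N) ≤ s.range ⊔ N := by
  intro g hg
  set l : Λ := ⟨mk' N g, mem_comap.mp hg⟩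
  refine mem_sup_of_normal_right.mpr ⟨s l, ⟨l, rfl⟩, (s l)⁻¹ * g, ?_, mul_inv_cancel_left _ _⟩
  have : mk' N ((s l)⁻¹ * g) = 1 := by rw [map_mul, map_inv, hs, inv_mul_eq_one]
  exact (eq_one_iff _).mp this

lemma map_range_inf_map_eq_bot {C : Type*} [Group C] (f : G →* C) (hf : f.ker ≤ N) :
    s.range.map f ⊓ N.map f = ⊥ := by
  rw [eq_bot_iff]
  rintro - ⟨⟨-, ⟨l, rfl⟩, rfl⟩, ⟨n, hn, hfn⟩⟩
  have hsN : s l ∈ N := by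
    have : s l * n⁻¹ ∈ N := hf (by rw [MonoidHom.mem_ker, map_mul, map_inv, hfn, mul_inv_cancel])
    simpa using mul_mem this hn
  rw [eq_one_of_section_mem N Λ s hs hsN, map_one, map_one]
  exact one_mem _

lemma pow_index_eq_one_of_mem_map_commutator_inf [Λ.FiniteIndex] {x : G ⧸ ⁅(⊤ : Subgroup G), N⁆}
    (hx : x ∈ (_root_.commutator G ⊓ N).map (mk' ⁅(⊤ : Subgroup G), N⁆)) : x ^ Λ.index = 1 := by
  obtain ⟨g, ⟨hgc, hgN⟩, rfl⟩ := hx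
  set π := mk' ⁅(⊤ : Subgroup G), N⁆
  set H := (Λ.comap (mk' N)).map π
  have hLN : ⁅(⊤ : Subgroup G), N⁆ ≤ N := commutator_le_right _ _
  have hindex : H.index = Λ.index := by
    rw [index_map_eq _ (mk'_surjective _), index_comap_of_surjective _ (mk'_surjective N)]
    rw [ker_mk']
    exact hLN.trans ((ker_mk' N).ge.trans (ker_le_comap _ _))
  have : H.FiniteIndex := ⟨hindex ▸ FiniteIndex.index_ne_zero⟩
  rw [← hindex]
  refine pow_index_eq_one_of_mem_commutator (map_mk'_le_center_quotient_commutator N) ?_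
    (map_range_inf_map_eq_bot N Λ s hs π (by rwa [ker_mk'])) (mem_map_of_mem π hgN) ?_
  · rw [← Subgroup.map_sup]
    exact map_mono (comap_mk'_le_range_sup N Λ s hs)
  · rw [_root_.commutator_def, ← map_top_of_surjective π (mk'_surjective _), ← map_commutator]
    exact mem_map_of_mem π hgc

end

/-- If `N` is finitely generated and `1 → N → G → G/N → 1` virtually splits,
then `([G,G] ∩ N)/[G,N]` is finite. -/
theorem inter_quot_finite {G : Type*} [Group G]
    (N : Subgroup G) [hN : N.Normal] [Group.FG N]
    (Λ : Subgroup (G ⧸ N)) [Λ.FiniteIndex] (s : Λ →* G)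
    (hs : ∀ l : Λ, QuotientGroup.mk' N (s l) = (l : G ⧸ N)) :
    Finite ((⁅(⊤ : Subgroup G), (⊤ : Subgroup G)⁆ ⊓ N : Subgroup G) ⧸
      (⁅(⊤ : Subgroup G), N⁆.subgroupOf (⁅(⊤ : Subgroup G), (⊤ : Subgroup G)⁆ ⊓ N))) := by
  set π := QuotientGroup.mk' ⁅(⊤ : Subgroup G), N⁆
  set K := ⁅(⊤ : Subgroup G), (⊤ : Subgroup G)⁆ ⊓ N
  have : Group.FG (N.map π) := by
    have : Group.FG (π.comp N.subtype).range := inferInstance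
    rwa [MonoidHom.range_comp, range_subtype] at this
  have hK : IsMulTorsion (K.map π) := ExponentExists.isMulTorsion
    ⟨Λ.index, Nat.pos_of_ne_zero FiniteIndex.index_ne_zero, fun x => Subtype.ext
      (pow_index_eq_one_of_mem_map_commutator_inf N Λ s hs x.2)⟩
  have := finite_of_le_of_le_center (map_mk'_le_center_quotient_commutator N)
    (map_mono inf_le_right) hK
  rw [← MonoidHom.domRestrict_range] at this
  rw [← QuotientGroup.ker_mk' ⁅(⊤ : Subgroup G), N⁆, ← MonoidHom.ker_domRestrict]
  exact Finite.of_injective _ (QuotientGroup.rangeKerLift_injective _)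
end

section
/- Let A and B be groups, G = A ∗ B their free product, q : A ∗ B → A × B the canonical surjection, and N = Ker(q). Then N/[G,N] is isomorphic as an abelian group to A^{ab} ⊗_ℤ B^{ab}, the tensor product of the abelianizations of A and B. -/
/-!
The map `A ∗ B → A × B` lifts to the central extension of `A × B` by `T = Aᵃᵇ ⊗ Bᵃᵇ` with
cocycle `((a, b), (a', b')) ↦ a ⊗ b'`. The lift sends `N` into the central copy of `T`, so its
`T`-coordinate is a homomorphism `N → T` that kills `[G, N]` and sends `[a, b]` to `a ⊗ b`.
Conversely, modulo `[G, N]` the commutator `[a, b]` is multiplicative in each variable, which gives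
`T → N / [G, N]`, `a ⊗ b ↦ [a, b]`. The first map is a left inverse of the second, and the second
is onto because `N` is the normal closure of the commutators `[a, b]`.
-/

open scoped TensorProduct

variable (A B : Type*) [Group A] [Group B]

/-- The canonical surjection `A ∗ B → A × B`. -/
def canonicalSurj : Monoid.Coprod A B →* A × B :=
  Monoid.Coprod.lift (MonoidHom.inl A B) (MonoidHom.inr A B)

open scoped commutatorElement

namespace Subgroup

variable {G : Type*} [Group G] (N : Subgroup G)

/-- The largest quotient of `N` on which conjugation by `G` is trivial. -/
abbrev CentralQuotient : Type _ := N ⧸ ⁅(⊤ : Subgroup G), N⁆.subgroupOf N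

namespace CentralQuotient

variable {N} [N.Normal]

theorem mk_conj (g : G) {n : G} (hn : n ∈ N) :
    (QuotientGroup.mk ⟨g * n * g⁻¹, ‹N.Normal›.conj_mem n hn g⟩ : N.CentralQuotient) =
      QuotientGroup.mk ⟨n, hn⟩ := by
  rw [QuotientGroup.eq, mem_subgroupOf]
  convert commutator_mem_commutator (mem_top g) (inv_mem hn) using 1
  simp [commutatorElement_def, mul_assoc]

instance : CommGroup N.CentralQuotient where
  mul_comm := by
    rintro ⟨m⟩ ⟨n⟩
    show QuotientGroup.mk (m * n) = QuotientGroup.mk (n * m)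
    rw [← mk_conj (n : G) (m * n).2]
    congr 1
    ext
    simp [mul_assoc]

theorem closure_mk_eq_top {S : Set G} (hN : N = normalClosure S) :
    closure (QuotientGroup.mk '' (N.subtype ⁻¹' S) : Set N.CentralQuotient) = ⊤ := by
  set R := closure (QuotientGroup.mk '' (N.subtype ⁻¹' S) : Set N.CentralQuotient)
  let M : Subgroup G := (R.comap (QuotientGroup.mk' _)).map N.subtype
  have hM : M.Normal := ⟨by
    rintro _ ⟨n, hn, rfl⟩ g
    refine ⟨⟨g * n * g⁻¹, ‹N.Normal›.conj_mem n n.2 g⟩, ?_, rfl⟩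
    simpa [mem_comap, mk_conj] using hn⟩
  have hNM : N ≤ M := hN ▸ normalClosure_le_normal fun s hs =>
    ⟨⟨s, hN ▸ subset_normalClosure hs⟩, subset_closure ⟨_, hs, rfl⟩, rfl⟩
  refine eq_top_iff.2 fun q _ => ?_
  obtain ⟨n, rfl⟩ := QuotientGroup.mk_surjective q
  obtain ⟨m, hm, hmn⟩ := hNM n.2
  rwa [Subtype.ext hmn] at hm

variable {H K : Type*} [Group H] [Group K]

variable (N) in
def commutatorPairing (f : H →* G) (g : K →* G) (hfg : ∀ a b, ⁅f a, g b⁆ ∈ N) :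
    H →* K →* N.CentralQuotient :=
  MonoidHom.mk'
    (fun a => MonoidHom.mk' (fun b => QuotientGroup.mk ⟨⁅f a, g b⁆, hfg a b⟩) fun b b' => by
      have h : (⟨⁅f a, g (b * b')⁆, hfg _ _⟩ : N) = ⟨⁅f a, g b⁆, hfg a b⟩ *
          ⟨g b * ⁅f a, g b'⁆ * (g b)⁻¹, ‹N.Normal›.conj_mem _ (hfg a b') (g b)⟩ := by
        ext
        simp only [map_mul, commutatorElement_mul_right_eq_mul_conj, coe_mul, mul_assoc]
      rw [h, QuotientGroup.mk_mul, mk_conj (g b) (hfg a b')])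
    fun a a' => by
      ext b
      have h : (⟨⁅f (a * a'), g b⁆, hfg _ _⟩ : N) =
          ⟨f a * ⁅f a', g b⁆ * (f a)⁻¹, ‹N.Normal›.conj_mem _ (hfg a' b) (f a)⟩ *
            ⟨⁅f a, g b⁆, hfg a b⟩ := by
        ext
        simp only [map_mul, commutatorElement_mul_left_eq_conj_mul, coe_mul]
      simp only [MonoidHom.mul_apply, MonoidHom.mk'_apply]
      rw [h, QuotientGroup.mk_mul, mk_conj (f a) (hfg a' b), mul_comm]

end CentralQuotient

end Subgroup

namespace Abelianization

variable {G H Q : Type*} [Group G] [Group H] [CommGroup Q]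

theorem of_surjective : Function.Surjective (of : G → Abelianization G) :=
  QuotientGroup.mk_surjective

def lift₂ (f : G →* H →* Q) : Abelianization G →* Abelianization H →* Q :=
  (lift (lift f).flip).flip

@[simp]
theorem lift₂_of_of (f : G →* H →* Q) (a : G) (b : H) : lift₂ f (of a) (of b) = f a b := by
  simp [lift₂]

def tensorLift (f : G →* H →* Q) :
    Additive (Abelianization G) ⊗[ℤ] Additive (Abelianization H) →+ Additive Q :=
  TensorProduct.liftAddHom
    (AddMonoidHom.mk' (fun x => (lift₂ f x.toMul).toAdditive) fun x y => by ext; simp)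
    fun r x y => by simp

theorem tensorLift_tmul (f : G →* H →* Q) (a : G) (b : H) :
    tensorLift f (.ofMul (of a) ⊗ₜ .ofMul (of b)) = .ofMul (f a b) := by
  simp [tensorLift]

@[ext]
theorem tensor_addMonoidHom_ext {P : Type*} [AddCommGroup P]
    {φ ψ : Additive (Abelianization G) ⊗[ℤ] Additive (Abelianization H) →+ P}
    (h : ∀ a b, φ (.ofMul (of a) ⊗ₜ .ofMul (of b)) = ψ (.ofMul (of a) ⊗ₜ .ofMul (of b))) :
    φ = ψ := by
  refine AddMonoidHom.toIntLinearMap_injective (TensorProduct.ext' fun x y => ?_)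
  obtain ⟨a, rfl⟩ := (Additive.ofMul.surjective.comp (of_surjective (G := G))) x
  obtain ⟨b, rfl⟩ := (Additive.ofMul.surjective.comp (of_surjective (G := H))) y
  exact h a b

end Abelianization

open Monoid.Coprod Subgroup

variable {A B}

theorem commutator_inl_inr_mem_ker (a : A) (b : B) :
    ⁅(inl a : Monoid.Coprod A B), inr b⁆ ∈ (canonicalSurj A B).ker := by
  simp [canonicalSurj, commutatorElement_def]

variable (A B) in
theorem ker_canonicalSurj : (canonicalSurj A B).ker =
    normalClosure {⁅(inl a : Monoid.Coprod A B), inr b⁆ | (a : A) (b : B)} := by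
  set M := normalClosure
    {⁅(inl a : Monoid.Coprod A B), (inr b : Monoid.Coprod A B)⁆ | (a : A) (b : B)}
  refine le_antisymm ?_ (normalClosure_le_normal ?_)
  · have hcomm (a : A) (b : B) :
        Commute (QuotientGroup.mk' M (inl a)) (QuotientGroup.mk' M (inr b)) := by
      rw [← commutatorElement_eq_one_iff_commute, ← map_commutatorElement, ← MonoidHom.mem_ker,
        QuotientGroup.ker_mk']
      exact subset_normalClosure ⟨a, b, rfl⟩
    -- so the projection onto `A ∗ B ⧸ M` factors through `A × B`
    let r : A × B →* Monoid.Coprod A B ⧸ M :=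
      MonoidHom.noncommCoprod ((QuotientGroup.mk' M).comp inl) ((QuotientGroup.mk' M).comp inr)
        hcomm
    have hr : r.comp (canonicalSurj A B) = QuotientGroup.mk' M := by
      ext <;> simp [r, canonicalSurj]
    intro g hg
    rw [← QuotientGroup.ker_mk' M, MonoidHom.mem_ker, ← hr, MonoidHom.comp_apply, hg, map_one]
  · rintro _ ⟨a, b, rfl⟩
    exact commutator_inl_inr_mem_ker a b

variable (A B) in
structure TensorExtension where
  fst : A
  snd : B
  tensor : Additive (Abelianization A) ⊗[ℤ] Additive (Abelianization B)

namespace TensorExtension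

open Abelianization TensorProduct

instance : Mul (TensorExtension A B) :=
  ⟨fun x y => ⟨x.fst * y.fst, x.snd * y.snd,
    x.tensor + y.tensor + .ofMul (of x.fst) ⊗ₜ .ofMul (of y.snd)⟩⟩

instance : One (TensorExtension A B) := ⟨⟨1, 1, 0⟩⟩

instance : Inv (TensorExtension A B) :=
  ⟨fun x => ⟨x.fst⁻¹, x.snd⁻¹, -x.tensor + .ofMul (of x.fst) ⊗ₜ .ofMul (of x.snd)⟩⟩

@[simp] theorem mul_def (x y : TensorExtension A B) : x * y = ⟨x.fst * y.fst, x.snd * y.snd,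
    x.tensor + y.tensor + .ofMul (of x.fst) ⊗ₜ .ofMul (of y.snd)⟩ := rfl

@[simp] theorem one_def : (1 : TensorExtension A B) = ⟨1, 1, 0⟩ := rfl

@[simp] theorem inv_def (x : TensorExtension A B) :
    x⁻¹ = ⟨x.fst⁻¹, x.snd⁻¹, -x.tensor + .ofMul (of x.fst) ⊗ₜ .ofMul (of x.snd)⟩ := rfl

instance : Group (TensorExtension A B) where
  mul_assoc x y z := by
    simp only [mul_def, mk.injEq, map_mul, ofMul_mul, add_tmul, tmul_add]
    exact ⟨mul_assoc .., mul_assoc .., by abel⟩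
  one_mul x := by simp
  mul_one x := by simp
  inv_mul_cancel x := by
    simp only [inv_def, mul_def, map_inv, ofMul_inv, neg_tmul, one_def, mk.injEq]
    exact ⟨inv_mul_cancel _, inv_mul_cancel _, by abel⟩

theorem commute_mk_one_one (t : Additive (Abelianization A) ⊗[ℤ] Additive (Abelianization B))
    (x : TensorExtension A B) : Commute ⟨1, 1, t⟩ x := by
  simp [Commute, SemiconjBy, add_comm]

variable (A B) in
def proj : TensorExtension A B →* A × B where
  toFun x := (x.fst, x.snd)
  map_one' := rfl
  map_mul' _ _ := rfl

variable (A B) in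
def ofCoprod : Monoid.Coprod A B →* TensorExtension A B :=
  lift (.mk' (fun a => ⟨a, 1, 0⟩) fun _ _ => by simp) (.mk' (fun b => ⟨1, b, 0⟩) fun _ _ => by simp)

@[simp] theorem ofCoprod_inl (a : A) : ofCoprod A B (inl a) = ⟨a, 1, 0⟩ := lift_apply_inl ..

@[simp] theorem ofCoprod_inr (b : B) : ofCoprod A B (inr b) = ⟨1, b, 0⟩ := lift_apply_inr ..

theorem proj_ofCoprod (g : Monoid.Coprod A B) :
    proj A B (ofCoprod A B g) = canonicalSurj A B g := by
  rw [← MonoidHom.comp_apply]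
  congr 1
  ext <;> simp [proj, canonicalSurj]

theorem ofCoprod_of_mem_ker {n : Monoid.Coprod A B} (hn : n ∈ (canonicalSurj A B).ker) :
    ofCoprod A B n = ⟨1, 1, (ofCoprod A B n).tensor⟩ := by
  have h := proj_ofCoprod n
  rw [MonoidHom.mem_ker.1 hn] at h
  generalize ofCoprod A B n = x at h ⊢
  cases x
  simp_all [proj]

theorem commutator_le_ker_ofCoprod :
    ⁅(⊤ : Subgroup (Monoid.Coprod A B)), (canonicalSurj A B).ker⁆ ≤ (ofCoprod A B).ker := by
  rw [commutator_le]
  intro g _ n hn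
  rw [MonoidHom.mem_ker, map_commutatorElement, commutatorElement_eq_one_iff_commute,
    ofCoprod_of_mem_ker hn]
  exact (commute_mk_one_one _ _).symm

theorem ofCoprod_commutator (a : A) (b : B) : ofCoprod A B ⁅(inl a : Monoid.Coprod A B), inr b⁆ =
    ⟨1, 1, .ofMul (of a) ⊗ₜ .ofMul (of b)⟩ := by
  simp [commutatorElement_def]

end TensorExtension

open Abelianization TensorProduct TensorExtension

variable (A B) in
def kerToTensor : (canonicalSurj A B).ker →*
    Multiplicative (Additive (Abelianization A) ⊗[ℤ] Additive (Abelianization B)) where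
  toFun n := .ofAdd (ofCoprod A B n).tensor
  map_one' := by simp
  map_mul' m n := by
    rw [coe_mul, map_mul, ofCoprod_of_mem_ker m.2]
    simp

variable (A B) in
def kerQuotientToTensor : Additive (canonicalSurj A B).ker.CentralQuotient →+
    Additive (Abelianization A) ⊗[ℤ] Additive (Abelianization B) :=
  MonoidHom.toAdditiveLeft <| QuotientGroup.lift _ (kerToTensor A B) fun n hn => by
    simp [kerToTensor, MonoidHom.mem_ker.1 (commutator_le_ker_ofCoprod (mem_subgroupOf.1 hn))]

theorem kerQuotientToTensor_mk (n : (canonicalSurj A B).ker) :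
    kerQuotientToTensor A B (.ofMul (QuotientGroup.mk n)) = (ofCoprod A B n).tensor :=
  rfl

variable (A B) in
def tensorToKerQuotient : Additive (Abelianization A) ⊗[ℤ] Additive (Abelianization B) →+
    Additive (canonicalSurj A B).ker.CentralQuotient :=
  tensorLift (CentralQuotient.commutatorPairing _ inl inr commutator_inl_inr_mem_ker)

theorem tensorToKerQuotient_tmul (a : A) (b : B) :
    tensorToKerQuotient A B (.ofMul (of a) ⊗ₜ .ofMul (of b)) =
      .ofMul (QuotientGroup.mk ⟨⁅inl a, inr b⁆, commutator_inl_inr_mem_ker a b⟩) :=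
  tensorLift_tmul ..

theorem kerQuotientToTensor_comp_tensorToKerQuotient :
    (kerQuotientToTensor A B).comp (tensorToKerQuotient A B) = .id _ := by
  ext a b
  rw [AddMonoidHom.comp_apply, tensorToKerQuotient_tmul, kerQuotientToTensor_mk,
    ofCoprod_commutator, AddMonoidHom.id_apply]

theorem tensorToKerQuotient_surjective : Function.Surjective (tensorToKerQuotient A B) := by
  refine (MonoidHom.range_eq_top (f := AddMonoidHom.toMultiplicative (tensorToKerQuotient A B))).1
    (top_le_iff.1 ((CentralQuotient.closure_mk_eq_top (ker_canonicalSurj A B)).ge.trans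
      ((closure_le _).2 ?_)))
  rintro _ ⟨⟨_, _⟩, ⟨a, b, rfl⟩, rfl⟩
  exact ⟨.ofAdd (.ofMul (of a) ⊗ₜ .ofMul (of b)), tensorToKerQuotient_tmul a b⟩

/-- For `G = A ∗ B` and `N = Ker(A ∗ B → A × B)`, the quotient `N/[G,N]` is
isomorphic to `A^{ab} ⊗_ℤ B^{ab}` as an abelian group. -/
theorem ker_quot_iso_tensor :
    Nonempty (Additive ((canonicalSurj A B).ker ⧸
        (⁅(⊤ : Subgroup (Monoid.Coprod A B)), (canonicalSurj A B).ker⁆.subgroupOf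
          (canonicalSurj A B).ker)) ≃+
      (Additive (Abelianization A) ⊗[ℤ] Additive (Abelianization B))) := by
  have hinj : Function.Injective (tensorToKerQuotient A B) :=
    Function.LeftInverse.injective
      (DFunLike.congr_fun kerQuotientToTensor_comp_tensorToKerQuotient)
  exact ⟨(AddEquiv.ofBijective _ ⟨hinj, tensorToKerQuotient_surjective⟩).symm⟩
end

section
/- Let F₂ = ⟨a,b⟩ be the free group of rank 2 and let G = F₂ ⋊ (ℤ/2ℤ) where the nontrivial element τ acts by swapping a and b. Set N = F₂ (as a normal subgroup of G) and x = [a,b]. Then every G-invariant homogeneous quasimorphism f on N satisfies f(x) = 0, and consequently scl_{G,N}(x) = 0; on the other hand scl_N(x) = 1/2 > 0. Hence scl_{G,N} and scl_N are not equivalent on [N,N]. -/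
open Filter Topology
open scoped commutatorElement

variable {G : Type*} [Group G]

/-- The stable `(G,N)`-commutator length (the limit exists, so it equals this limsup). -/
noncomputable def sclGN (N : Subgroup G) (x : G) : ℝ :=
  Filter.limsup (fun n : ℕ => (clGN N (x ^ n) : ℝ) / n) Filter.atTop

/-!
Conjugation by `τ` inverts `x = ⁅a, b⁆`. Hence an invariant homogeneous quasimorphism has
`f x = f x⁻¹ = -f x`, and `x ^ (2 * j) = ⁅τ, x ^ (-j)⁆` is a single `(G, N)`-commutator, so
`cl_{G,N} (x ^ n) ≤ 2` for all `n`.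

Inside `N ≅ F₂`, `⁅a, b⁆ ^ n` is a product of `n / 2 + 1` commutators. Conversely, the translation
number of lifts of circle homeomorphisms is a quasimorphism of defect `1`, so it is at most `2 * m`
on a product of `m` commutators; a representation of `F₂` by piecewise-linear lifts in which
`⁅a, b⁆` has translation number `1` therefore gives `n ≤ 2 * cl (⁅a, b⁆ ^ n)`.
-/

open scoped Pointwise

def relCommutatorSet (N : Subgroup G) : Set G :=
  {w | ∃ g : G, ∃ h ∈ N, ⁅g, h⁆ = w}

theorem relCommutatorSet_top : relCommutatorSet (⊤ : Subgroup G) = commutatorSet G := by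
  ext w
  simp [relCommutatorSet, mem_commutatorSet_iff]

theorem one_mem_relCommutatorSet (N : Subgroup G) : (1 : G) ∈ relCommutatorSet N :=
  ⟨1, 1, N.one_mem, commutatorElement_self 1⟩

theorem isCommProd_iff_mem_pow {N : Subgroup G} {m : ℕ} {x : G} :
    IsCommProd N m x ↔ x ∈ relCommutatorSet N ^ m := by
  rw [Set.mem_pow]
  constructor
  · rintro ⟨c, hc, rfl⟩
    refine ⟨fun i => ⟨c i, ?_⟩, rfl⟩
    obtain ⟨g, h, hh, hci⟩ := hc i
    exact ⟨g, h, hh, hci.symm⟩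
  · rintro ⟨c, rfl⟩
    refine ⟨fun i => c i, fun i => ?_, rfl⟩
    obtain ⟨g, h, hh, hci⟩ := (c i).2
    exact ⟨g, h, hh, hci.symm⟩

theorem clGN_le {N : Subgroup G} {m : ℕ} {x : G} (h : x ∈ relCommutatorSet N ^ m) :
    clGN N x ≤ m :=
  Nat.sInf_le (isCommProd_iff_mem_pow.2 h)

theorem mem_pow_clGN {N : Subgroup G} {m : ℕ} {x : G} (h : x ∈ relCommutatorSet N ^ m) :
    x ∈ relCommutatorSet N ^ clGN N x :=
  isCommProd_iff_mem_pow.1 <|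
    Nat.sInf_mem (s := {m | IsCommProd N m x}) ⟨m, isCommProd_iff_mem_pow.2 h⟩

theorem sclGN_eq_of_bounds {N : Subgroup G} {x : G} {c K : ℝ}
    (h : ∀ n : ℕ, 1 ≤ n → c * n ≤ clGN N (x ^ n) ∧ (clGN N (x ^ n) : ℝ) ≤ c * n + K) :
    sclGN N x = c := by
  refine Tendsto.limsup_eq (tendsto_of_tendsto_of_tendsto_of_le_of_le' tendsto_const_nhds
    (by simpa using tendsto_const_nhds.add (tendsto_const_div_atTop_nhds_zero_nat K))
    ?_ ?_) <;>
    filter_upwards [eventually_ge_atTop 1] with n hn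
  · have hn' : (0 : ℝ) < n := by exact_mod_cast hn
    rw [le_div_iff₀ hn']
    exact (h n hn).1
  · have hn' : (0 : ℝ) < n := by exact_mod_cast hn
    rw [div_le_iff₀ hn', add_mul, div_mul_cancel₀ _ hn'.ne']
    exact (h n hn).2

theorem sclGN_eq_zero_of_conj_eq_inv {N : Subgroup G} {x t : G}
    (hx : x ∈ relCommutatorSet N) (hxN : x ∈ N) (ht : t * x * t⁻¹ = x⁻¹) : sclGN N x = 0 := by
  have heven (j : ℕ) : x ^ (2 * j) ∈ relCommutatorSet N := by
    refine ⟨t, (x ^ j)⁻¹, N.inv_mem (N.pow_mem hxN j), ?_⟩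
    rw [commutatorElement_def, inv_inv, ← conj_inv, ← conj_pow, ht, inv_pow, inv_inv, two_mul,
      pow_add]
  have hpow (n : ℕ) : x ^ n ∈ relCommutatorSet N ^ 2 := by
    rw [pow_two]
    obtain ⟨j, rfl | rfl⟩ := Nat.even_or_odd' n
    · exact ⟨_, heven j, 1, one_mem_relCommutatorSet N, mul_one _⟩
    · exact ⟨_, heven j, x, hx, (pow_succ x _).symm⟩
  refine sclGN_eq_of_bounds (K := 2) fun n _ => ⟨by simp, ?_⟩
  simpa using (Nat.cast_le (α := ℝ)).2 (clGN_le (hpow n))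

theorem eq_zero_of_map_inv_eq {f : G → ℝ} (hhom : ∀ (x : G) (n : ℤ), f (x ^ n) = n * f x)
    {x : G} (hx : f x⁻¹ = f x) : f x = 0 := by
  rw [← zpow_neg_one, hhom] at hx
  push_cast at hx
  linarith

def twistedCommutatorPower (a b : G) (r : ℕ) (j : ℤ) : G :=
  a ^ j * ⁅a, b⁆ ^ r * (a * b * a⁻¹) * a ^ (-j) * (b⁻¹ * a * b * a⁻¹) ^ r * b⁻¹

theorem twistedCommutatorPower_zero_right (a b : G) (r : ℕ) :
    twistedCommutatorPower a b r 0 = ⁅a, b⁆ ^ (2 * r + 1) := by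
  have hsemi : SemiconjBy (a * b * a⁻¹) (b⁻¹ * a * b * a⁻¹) ⁅a, b⁆ := by
    simp only [SemiconjBy, commutatorElement_def]
    group
  rw [twistedCommutatorPower, zpow_zero, one_mul, neg_zero, zpow_zero, mul_one,
    mul_assoc _ (a * b * a⁻¹), (hsemi.pow_right r).eq, two_mul, pow_succ, pow_add]
  simp only [commutatorElement_def]
  group

theorem twistedCommutatorPower_mem_commutatorSet_pow (a b : G) (r : ℕ) (j : ℤ) :
    twistedCommutatorPower a b r j ∈ commutatorSet G ^ (r + 1) := by
  induction r generalizing j with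
  | zero =>
    rw [zero_add, pow_one]
    exact ⟨a ^ j * a, b, by simp only [twistedCommutatorPower, commutatorElement_def]; group⟩
  | succ r ih =>
    rw [pow_succ' (commutatorSet G)]
    -- one commutator splits off, leaving the word of the same shape with `j` shifted by `2`
    refine Set.mem_mul.2 ⟨_, commutator_mem_commutatorSet
      (a ^ j * ⁅a, b⁆ * a ^ (-j - 2))
      (a ^ (j + 2) * ⁅a, b⁆ ^ r * (a * b * a⁻¹) * a ^ (-j) * b⁻¹ * a⁻¹ * ⁅a, b⁆ * a ^ (-j - 2)),
      _, ih (j + 2), ?_⟩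
    simp only [twistedCommutatorPower, pow_succ']
    generalize ⁅a, b⁆ ^ r = Z
    generalize (b⁻¹ * a * b * a⁻¹) ^ r = Y
    simp only [commutatorElement_def]
    group

theorem commutatorElement_pow_mem_commutatorSet_pow (a b : G) (n : ℕ) :
    ⁅a, b⁆ ^ n ∈ commutatorSet G ^ (n / 2 + 1) := by
  have hodd (k : ℕ) : ⁅a, b⁆ ^ (2 * k + 1) ∈ commutatorSet G ^ (k + 1) :=
    twistedCommutatorPower_zero_right a b k ▸ twistedCommutatorPower_mem_commutatorSet_pow a b k 0
  obtain ⟨k, rfl | rfl⟩ := Nat.even_or_odd' n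
  · cases k with
    | zero => simpa using one_mem_commutatorSet G
    | succ k =>
      rw [show 2 * (k + 1) / 2 + 1 = k + 1 + 1 by omega, mul_add, mul_one,
        pow_succ _ (2 * k + 1), pow_succ]
      exact Set.mul_mem_mul (hodd k) (commutator_mem_commutatorSet a b)
  · rw [show (2 * k + 1) / 2 + 1 = k + 1 by omega]
    exact hodd k

namespace CircleDeg1Lift

theorem translationNumber_mul_le (f g : CircleDeg1Lift) :
    (f * g).translationNumber ≤ f.translationNumber + g.translationNumber + 1 := by
  set k : ℤ := ⌊g.translationNumber⌋ + 1
  set T : CircleDeg1Lift := ↑(translate (Multiplicative.ofAdd (k : ℝ)))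
  have hgT : ∀ x, g x ≤ x + k := fun x => by
    have := g.map_lt_add_floor_translationNumber_add_one x
    push_cast [k]
    linarith
  have hle : f * g ≤ T * f := fun x => by
    calc f (g x) ≤ f (x + k) := f.mono (hgT x)
      _ = (T * f) x := by rw [map_add_int, mul_apply, translate_apply, add_comm]
  have hcomm : Commute T f := commute_iff_commute.2 fun x => by
    simp [T, translate_apply, map_int_add]
  calc (f * g).translationNumber ≤ (T * f).translationNumber := translationNumber_mono hle
    _ = k + f.translationNumber := by
      rw [translationNumber_mul_of_commute hcomm, translationNumber_translate]
    _ ≤ f.translationNumber + g.translationNumber + 1 := by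
      have := Int.floor_le g.translationNumber
      push_cast [k]
      linarith

theorem translationNumber_commutatorElement_le (u v : CircleDeg1Liftˣ) :
    (⁅u, v⁆ : CircleDeg1Liftˣ).val.translationNumber ≤ 1 := by
  have h := translationNumber_mul_le ↑(u * v * u⁻¹) ↑v⁻¹
  rw [← Units.val_mul, ← commutatorElement_def, Units.val_mul, Units.val_mul,
    translationNumber_conj_eq, translationNumber_units_inv] at h
  linarith

theorem translationNumber_le_of_mem_commutatorSet_pow (ρ : G →* CircleDeg1Liftˣ) {m : ℕ} {y : G}
    (hy : y ∈ commutatorSet G ^ m) : (ρ y).val.translationNumber ≤ 2 * m := by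
  induction m generalizing y with
  | zero =>
    obtain rfl : y = 1 := by simpa using hy
    simp [translationNumber_one]
  | succ m ih =>
    rw [pow_succ] at hy
    obtain ⟨y', hy', _, ⟨u, v, rfl⟩, rfl⟩ := hy
    have := translationNumber_mul_le (ρ y') (ρ ⁅u, v⁆)
    rw [map_commutatorElement] at this
    have := translationNumber_commutatorElement_le (ρ u) (ρ v)
    have := ih hy'
    simp only [map_mul, map_commutatorElement, Units.val_mul]
    push_cast
    linarith

theorem units_commutatorElement_apply (u v : CircleDeg1Liftˣ) (x : ℝ) :
    (⁅u, v⁆ : CircleDeg1Liftˣ) (v (u x)) = u (v x) := by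
  simp [commutatorElement_def, mul_apply, units_inv_apply_apply]

noncomputable def periodicExtension (φ : ℝ → ℝ) (hφ : Monotone φ) (h01 : φ 1 ≤ φ 0 + 1) :
    CircleDeg1Lift where
  toFun x := ⌊x⌋ + φ (Int.fract x)
  monotone' x y hxy := by
    rcases (Int.floor_mono hxy).eq_or_lt with hfl | hfl
    · have : Int.fract x ≤ Int.fract y := by
        rw [Int.fract, Int.fract, hfl]
        linarith
      simp only [hfl]
      linarith [hφ this]
    · have : (⌊x⌋ : ℝ) + 1 ≤ ⌊y⌋ := by exact_mod_cast hfl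
      linarith [hφ (Int.fract_lt_one x).le, hφ (Int.fract_nonneg y)]
  map_add_one' x := by
    simp only [Int.floor_add_one, Int.fract_add_one]
    push_cast
    ring

variable {φ ψ : ℝ → ℝ} {hφ : Monotone φ} {hφ01 : φ 1 ≤ φ 0 + 1}
  {hψ : Monotone ψ} {hψ01 : ψ 1 ≤ ψ 0 + 1}

theorem periodicExtension_apply_of_mem_Ico {t : ℝ} (ht : t ∈ Set.Ico (0 : ℝ) 1) :
    periodicExtension φ hφ hφ01 t = φ t := by
  change (⌊t⌋ : ℝ) + φ (Int.fract t) = φ t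
  rw [Int.floor_eq_zero_iff.2 ht, Int.fract_eq_self.2 ht]
  simp

theorem periodicExtension_mul_eq_one
    (h : ∀ t ∈ Set.Ico (0 : ℝ) 1, ψ t ∈ Set.Ico (0 : ℝ) 1 ∧ φ (ψ t) = t) :
    periodicExtension φ hφ hφ01 * periodicExtension ψ hψ hψ01 = 1 := by
  ext x
  obtain ⟨hmem, hinv⟩ := h (Int.fract x) ⟨Int.fract_nonneg x, Int.fract_lt_one x⟩
  change periodicExtension φ hφ hφ01 (⌊x⌋ + ψ (Int.fract x)) = x
  rw [map_int_add, periodicExtension_apply_of_mem_Ico hmem, hinv, Int.floor_add_fract]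

end CircleDeg1Lift

theorem sclGN_top_commutatorElement_eq_half (a b : G) (ρ : G →* CircleDeg1Liftˣ)
    (hρ : (ρ ⁅a, b⁆).val.translationNumber = 1) :
    sclGN (⊤ : Subgroup G) ⁅a, b⁆ = 1 / 2 := by
  refine sclGN_eq_of_bounds (K := 1) fun n hn => ?_
  have hmem : ⁅a, b⁆ ^ n ∈ relCommutatorSet (⊤ : Subgroup G) ^ (n / 2 + 1) := by
    rw [relCommutatorSet_top]
    exact commutatorElement_pow_mem_commutatorSet_pow a b n
  constructor
  · have := CircleDeg1Lift.translationNumber_le_of_mem_commutatorSet_pow ρ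
      (relCommutatorSet_top (G := G) ▸ mem_pow_clGN hmem)
    rw [map_pow, Units.val_pow_eq_pow_val, CircleDeg1Lift.translationNumber_pow, hρ] at this
    linarith
  · have hcl : (clGN (⊤ : Subgroup G) (⁅a, b⁆ ^ n) : ℝ) ≤ (n / 2 : ℕ) + 1 := by
      exact_mod_cast clGN_le hmem
    have : ((n / 2 : ℕ) : ℝ) ≤ n / 2 := Nat.cast_div_le
    linarith

namespace SwapExample

open CircleDeg1Lift

/-- Chosen so that `liftA` maps `3/8 ↦ 1/8` and `5/8 ↦ 7/8`; with `liftB` its conjugate by a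
quarter turn, the commutator then moves `-1/8 = liftB (liftA (3/8))` to
`7/8 = liftA (liftB (3/8))`. -/
noncomputable def stretch (t : ℝ) : ℝ :=
  if t ≤ 3 / 8 then t / 3 else if t ≤ 5 / 8 then 3 * t - 1 else t / 3 + 2 / 3

noncomputable def stretchInv (u : ℝ) : ℝ :=
  if u ≤ 1 / 8 then 3 * u else if u ≤ 7 / 8 then (u + 1) / 3 else 3 * u - 2

theorem stretch_monotone : Monotone stretch := fun t s h => by
  unfold stretch; split_ifs <;> linarith

theorem stretchInv_monotone : Monotone stretchInv := fun t s h => by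
  unfold stretchInv; split_ifs <;> linarith

theorem stretch_stretchInv (u : ℝ) (hu : u ∈ Set.Ico (0 : ℝ) 1) :
    stretchInv u ∈ Set.Ico (0 : ℝ) 1 ∧ stretch (stretchInv u) = u := by
  obtain ⟨h0, h1⟩ := hu
  unfold stretch stretchInv
  refine ⟨⟨?_, ?_⟩, ?_⟩ <;> split_ifs <;> linarith

theorem stretchInv_stretch (t : ℝ) (ht : t ∈ Set.Ico (0 : ℝ) 1) :
    stretch t ∈ Set.Ico (0 : ℝ) 1 ∧ stretchInv (stretch t) = t := by
  obtain ⟨h0, h1⟩ := ht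
  unfold stretch stretchInv
  refine ⟨⟨?_, ?_⟩, ?_⟩ <;> split_ifs <;> linarith

noncomputable def liftA : CircleDeg1Liftˣ where
  val := periodicExtension stretch stretch_monotone (by norm_num [stretch])
  inv := periodicExtension stretchInv stretchInv_monotone (by norm_num [stretchInv])
  val_inv := periodicExtension_mul_eq_one stretch_stretchInv
  inv_val := periodicExtension_mul_eq_one stretchInv_stretch

noncomputable def quarterTurn : CircleDeg1Liftˣ := translate (Multiplicative.ofAdd (1 / 4))

noncomputable def liftB : CircleDeg1Liftˣ := quarterTurn⁻¹ * liftA * quarterTurn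

theorem liftA_apply {t : ℝ} (ht : t ∈ Set.Ico (0 : ℝ) 1) :
    (liftA : CircleDeg1Lift) t = stretch t := by
  exact periodicExtension_apply_of_mem_Ico (hφ := stretch_monotone)
    (hφ01 := by norm_num [stretch]) ht

theorem liftB_apply (y : ℝ) : (liftB : CircleDeg1Lift) y = -(1 / 4) + liftA (1 / 4 + y) := by
  simp [liftB, quarterTurn, mul_apply, translate_apply, translate_inv_apply]

theorem translationNumber_commutator_liftA_liftB :
    (⁅liftA, liftB⁆ : CircleDeg1Liftˣ).val.translationNumber = 1 := by
  have hA₁ : (liftA : CircleDeg1Lift) (3 / 8) = 1 / 8 := by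
    rw [liftA_apply (by norm_num)]; norm_num [stretch]
  have hA₂ : (liftA : CircleDeg1Lift) (5 / 8) = 7 / 8 := by
    rw [liftA_apply (by norm_num)]; norm_num [stretch]
  have hB₁ : (liftB : CircleDeg1Lift) (1 / 8) = -(1 / 8) := by
    rw [liftB_apply]; norm_num [hA₁]
  have hB₂ : (liftB : CircleDeg1Lift) (3 / 8) = 5 / 8 := by
    rw [liftB_apply]; norm_num [hA₂]
  have := units_commutatorElement_apply liftA liftB (3 / 8)
  rw [hA₁, hB₁, hB₂, hA₂] at this
  exact_mod_cast translationNumber_of_eq_add_int _ (m := 1) (this.trans (by norm_num))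

end SwapExample

theorem swap_example_general (N : Subgroup G) (hN : N.Normal)
    (τ : G) (e : FreeGroup Bool ≃* N)
    (ha : τ * (e (FreeGroup.of false) : G) * τ⁻¹ = (e (FreeGroup.of true) : G))
    (hb : τ * (e (FreeGroup.of true) : G) * τ⁻¹ = (e (FreeGroup.of false) : G)) :
    (∀ (f : N → ℝ) (D : ℝ), (∀ x y : N, |f (x * y) - f x - f y| ≤ D) →
        (∀ (x : N) (n : ℤ), f (x ^ n) = n * f x) →
        (∀ (g : G) (x : N), f ⟨g * x * g⁻¹, hN.conj_mem x x.2 g⟩ = f x) →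
        f (e ⁅FreeGroup.of false, FreeGroup.of true⁆) = 0) ∧
      sclGN N ((e ⁅FreeGroup.of false, FreeGroup.of true⁆ : N) : G) = 0 ∧
      sclGN (⊤ : Subgroup N) (e ⁅FreeGroup.of false, FreeGroup.of true⁆) = 1 / 2 ∧
      ¬∃ C : ℝ, 0 < C ∧ ∀ y : N, (y : G) ∈ ⁅N, N⁆ →
        C⁻¹ * sclGN (⊤ : Subgroup N) y ≤ sclGN N (y : G) ∧
          sclGN N (y : G) ≤ C * sclGN (⊤ : Subgroup N) y := by
  set a := e (FreeGroup.of false)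
  set b := e (FreeGroup.of true)
  have hxG : ((⁅a, b⁆ : N) : G) = ⁅(a : G), (b : G)⁆ := map_commutatorElement N.subtype a b
  have hconj : τ * ⁅(a : G), (b : G)⁆ * τ⁻¹ = ⁅(a : G), (b : G)⁆⁻¹ := by
    rw [conjugate_commutatorElement, ha, hb, commutatorElement_inv]
  have hscl_rel : sclGN N ((⁅a, b⁆ : N) : G) = 0 := by
    rw [hxG]
    exact sclGN_eq_zero_of_conj_eq_inv ⟨a, b, b.2, rfl⟩ (hxG ▸ (⁅a, b⁆ : N).2) hconj
  have hscl_abs : sclGN (⊤ : Subgroup N) ⁅a, b⁆ = 1 / 2 := by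
    refine sclGN_top_commutatorElement_eq_half a b
      ((FreeGroup.lift fun i => if i then SwapExample.liftB else SwapExample.liftA).comp
        e.symm.toMonoidHom) ?_
    simpa [a, b] using SwapExample.translationNumber_commutator_liftA_liftB
  rw [map_commutatorElement e]
  refine ⟨fun f D _ hhom hinv => ?_, hscl_rel, hscl_abs, ?_⟩
  · have hτx : (⟨τ * ⁅a, b⁆ * τ⁻¹, hN.conj_mem _ (⁅a, b⁆ : N).2 τ⟩ : N) = ⁅a, b⁆⁻¹ :=
      Subtype.ext (by simp only [hxG, hconj, Subgroup.coe_inv])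
    exact eq_zero_of_map_inv_eq hhom (hτx ▸ hinv τ ⁅a, b⁆)
  · rintro ⟨C, hC, hequiv⟩
    have := (hequiv ⁅a, b⁆ (hxG ▸ Subgroup.commutator_mem_commutator a.2 b.2)).1
    rw [hscl_rel, hscl_abs] at this
    have : 0 < C⁻¹ * (1 / 2) := by positivity
    linarith

/-- For `G = F₂ ⋊ ℤ/2ℤ` (swap action), `N = F₂` and `x = [a,b]`: every `G`-invariant
homogeneous quasimorphism on `N` vanishes at `x`, hence `scl_{G,N}(x) = 0`, while
`scl_N(x) = 1/2`; consequently `scl_{G,N}` and `scl_N` are not equivalent on `[N,N]`. -/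
theorem swap_example (N : Subgroup G) (hN : N.Normal)
    (τ : G) (hτ : τ * τ = 1) (e : FreeGroup Bool ≃* N)
    (ha : τ * (e (FreeGroup.of false) : G) * τ⁻¹ = (e (FreeGroup.of true) : G))
    (hb : τ * (e (FreeGroup.of true) : G) * τ⁻¹ = (e (FreeGroup.of false) : G)) :
    (∀ (f : N → ℝ) (D : ℝ), (∀ x y : N, |f (x * y) - f x - f y| ≤ D) →
        (∀ (x : N) (n : ℤ), f (x ^ n) = n * f x) →
        (∀ (g : G) (x : N), f ⟨g * x * g⁻¹, hN.conj_mem x x.2 g⟩ = f x) →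
        f (e ⁅FreeGroup.of false, FreeGroup.of true⁆) = 0) ∧
      sclGN N ((e ⁅FreeGroup.of false, FreeGroup.of true⁆ : N) : G) = 0 ∧
      sclGN (⊤ : Subgroup N) (e ⁅FreeGroup.of false, FreeGroup.of true⁆) = 1 / 2 ∧
      ¬∃ C : ℝ, 0 < C ∧ ∀ y : N, (y : G) ∈ ⁅N, N⁆ →
        C⁻¹ * sclGN (⊤ : Subgroup N) y ≤ sclGN N (y : G) ∧
          sclGN N (y : G) ≤ C * sclGN (⊤ : Subgroup N) y :=
  swap_example_general N hN τ e ha hb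
end
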